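/- arXiv:2512.24999 — 7 statements merged into one kernel-verified Lean document; each statement's English description precedes it below -/
import Mathlib

section
/- Let f : ℝ^d → ℝ be convex, differentiable, and L-smooth for some L > 0, and let (θ_t) be gradient descent iterates θ_{t+1} = θ_t − η ∇f(θ_t) with constant step size η ∈ (0, 1/L]. Fix an integer T ≥ 1 and set λ_T := 1/(ηT). Then for every z ∈ ℝ^d, inf_{w ∈ ℝ^d} ( f(w) + (λ_T/4)‖θ_0 − w‖₂² ) ≤ f(θ_T) + (λ_T/4)‖θ_0 − θ_T‖₂² ≤ f(z) + λ_T ‖θ_0 − z‖₂². -/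
/-!
A gradient step with `L η ≤ 1` lowers `f` by at least `η/2 ‖∇f‖²` (descent lemma); together
with the tangent-plane inequality of convexity this gives the three-point bound
`2η (f θ_{t+1} - f z) ≤ ‖θ_t - z‖² - ‖θ_{t+1} - z‖²`. Telescoping, with `f θ_t` nonincreasing,
yields `f θ_T + (λ_T/2) ‖θ_T - z‖² ≤ f z + (λ_T/2) ‖θ_0 - z‖²`, and
`‖θ_0 - θ_T‖² ≤ 2 ‖θ_0 - z‖² + 2 ‖θ_T - z‖²` turns this into the upper bound. For the lower bound
the infimum only has to be taken over a set bounded below: `f` lies above its tangent plane at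
`θ_0`, and the quadratic penalty beats that linear term.
-/

open Set RealInnerProductSpace

section GradientDescent

variable {E : Type*} [NormedAddCommGroup E] [InnerProductSpace ℝ E] [CompleteSpace E]
  {f : E → ℝ}

theorem HasGradientAt.hasDerivAt_comp_lineMap {g x y : E} {t : ℝ}
    (h : HasGradientAt f g (AffineMap.lineMap x y t)) :
    HasDerivAt (fun s : ℝ => f (AffineMap.lineMap x y s)) ⟪g, y - x⟫ t :=
  (hasGradientAt_iff_hasFDerivAt.mp h).comp_hasDerivAt t AffineMap.hasDerivAt_lineMap

theorem ConvexOn.add_inner_gradient_le (hf : ConvexOn ℝ univ f) {x : E}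
    (hx : DifferentiableAt ℝ f x) (y : E) : f x + ⟪gradient f x, y - x⟫ ≤ f y := by
  have hline : ConvexOn ℝ univ (fun s : ℝ => f (AffineMap.lineMap x y s)) := by
    have h := hf.comp_affineMap (AffineMap.lineMap x y)
    rwa [preimage_univ] at h
  have hderiv := HasGradientAt.hasDerivAt_comp_lineMap (t := 0) (y := y)
    (by simpa using hx.hasGradientAt)
  have hslope := hline.le_slope_of_hasDerivAt (mem_univ 0) (mem_univ 1) one_pos hderiv
  simp only [slope_def_field, AffineMap.lineMap_apply_zero, AffineMap.lineMap_apply_one,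
    sub_zero, div_one] at hslope
  linarith

theorem le_add_inner_gradient_add_mul_sq_of_lipschitz {L : ℝ} (hf : Differentiable ℝ f)
    (hsmooth : ∀ x y : E, ‖gradient f x - gradient f y‖ ≤ L * ‖x - y‖) (x y : E) :
    f y ≤ f x + ⟪gradient f x, y - x⟫ + L / 2 * ‖y - x‖ ^ 2 := by
  set v := y - x
  have hφ (s : ℝ) : HasDerivAt (fun s : ℝ => f (AffineMap.lineMap x y s))
      ⟪gradient f (AffineMap.lineMap x y s), v⟫ s :=
    (hf _).hasGradientAt.hasDerivAt_comp_lineMap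
  have hB (s : ℝ) :
      HasDerivAt (fun s : ℝ => f x + s * ⟪gradient f x, v⟫ + L / 2 * ‖v‖ ^ 2 * s ^ 2)
      (⟪gradient f x, v⟫ + L * ‖v‖ ^ 2 * s) s := by
    refine ((((hasDerivAt_id' s).mul_const _).const_add (f x)).add
      ((hasDerivAt_pow 2 s).const_mul (L / 2 * ‖v‖ ^ 2))).congr_deriv ?_
    push_cast
    ring
  have hbound (s : ℝ) (hs : s ∈ Ico (0 : ℝ) 1) :
      ⟪gradient f (AffineMap.lineMap x y s), v⟫ ≤ ⟪gradient f x, v⟫ + L * ‖v‖ ^ 2 * s := by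
    have hdist : ‖AffineMap.lineMap x y s - x‖ = s * ‖v‖ := by
      rw [AffineMap.lineMap_apply_module', add_sub_cancel_right, norm_smul,
        Real.norm_of_nonneg hs.1]
    calc ⟪gradient f (AffineMap.lineMap x y s), v⟫
        = ⟪gradient f x, v⟫ + ⟪gradient f (AffineMap.lineMap x y s) - gradient f x, v⟫ := by
          rw [inner_sub_left]; ring
      _ ≤ ⟪gradient f x, v⟫ + L * ‖AffineMap.lineMap x y s - x‖ * ‖v‖ := by
          gcongr
          exact (real_inner_le_norm _ _).trans
            (mul_le_mul_of_nonneg_right (hsmooth _ _) (norm_nonneg v))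
      _ = ⟪gradient f x, v⟫ + L * ‖v‖ ^ 2 * s := by rw [hdist]; ring
  have := image_le_of_deriv_right_le_deriv_boundary
    (fun s _ => (hφ s).continuousAt.continuousWithinAt) (fun s _ => (hφ s).hasDerivWithinAt)
    (by simp) (fun s _ => (hB s).continuousAt.continuousWithinAt)
    (fun s _ => (hB s).hasDerivWithinAt) hbound (right_mem_Icc.mpr zero_le_one)
  simpa using this

variable {L η : ℝ}

theorem le_sub_mul_norm_gradient_sq_of_lipschitz (hf : Differentiable ℝ f)
    (hsmooth : ∀ x y : E, ‖gradient f x - gradient f y‖ ≤ L * ‖x - y‖)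
    (hη : 0 ≤ η) (hLη : L * η ≤ 1) (x : E) :
    f (x - η • gradient f x) ≤ f x - η / 2 * ‖gradient f x‖ ^ 2 := by
  have h := le_add_inner_gradient_add_mul_sq_of_lipschitz hf hsmooth x (x - η • gradient f x)
  rw [sub_sub_cancel_left, inner_neg_right, real_inner_smul_right, real_inner_self_eq_norm_sq,
    norm_neg, norm_smul, Real.norm_of_nonneg hη, mul_pow] at h
  nlinarith [mul_nonneg (mul_nonneg hη (sub_nonneg.mpr hLη)) (sq_nonneg ‖gradient f x‖)]

theorem ConvexOn.mul_sub_le_norm_sub_sq_sub_norm_sub_sq (hconv : ConvexOn ℝ univ f)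
    (hf : Differentiable ℝ f)
    (hsmooth : ∀ x y : E, ‖gradient f x - gradient f y‖ ≤ L * ‖x - y‖)
    (hη : 0 ≤ η) (hLη : L * η ≤ 1) (x z : E) :
    2 * η * (f (x - η • gradient f x) - f z) ≤
      ‖x - z‖ ^ 2 - ‖x - η • gradient f x - z‖ ^ 2 := by
  have hdecr := le_sub_mul_norm_gradient_sq_of_lipschitz hf hsmooth hη hLη x
  have hfirst := hconv.add_inner_gradient_le (hf x) z
  have hexpand : ‖x - η • gradient f x - z‖ ^ 2 =
      ‖x - z‖ ^ 2 - 2 * η * ⟪gradient f x, x - z⟫ + η ^ 2 * ‖gradient f x‖ ^ 2 := by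
    rw [sub_right_comm, norm_sub_sq_real, real_inner_smul_right, norm_smul,
      Real.norm_of_nonneg hη, mul_pow, real_inner_comm]
    ring
  have hsymm : ⟪gradient f x, z - x⟫ = -⟪gradient f x, x - z⟫ := by
    rw [← inner_neg_right, neg_sub]
  rw [hsymm] at hfirst
  rw [hexpand]
  nlinarith

theorem nat_mul_le_sub_of_antitone_of_le_sub {b r : ℕ → ℝ} (hb : Antitone b)
    (h : ∀ t, b (t + 1) ≤ r t - r (t + 1)) (n : ℕ) : n * b n ≤ r 0 - r n := by
  induction n with
  | zero => simp
  | succ n ih =>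
    have hmono : (n : ℝ) * b (n + 1) ≤ n * b n :=
      mul_le_mul_of_nonneg_left (hb n.le_succ) n.cast_nonneg
    push_cast
    linarith [h n]

theorem ConvexOn.gradientDescent_mul_sub_le (hconv : ConvexOn ℝ univ f) (hf : Differentiable ℝ f)
    (hsmooth : ∀ x y : E, ‖gradient f x - gradient f y‖ ≤ L * ‖x - y‖)
    (hη : 0 ≤ η) (hLη : L * η ≤ 1) {θ : ℕ → E}
    (hθ : ∀ t, θ (t + 1) = θ t - η • gradient f (θ t)) (z : E) (T : ℕ) :
    2 * η * T * (f (θ T) - f z) ≤ ‖θ 0 - z‖ ^ 2 - ‖θ T - z‖ ^ 2 := by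
  have hanti : Antitone fun t => 2 * η * (f (θ t) - f z) := by
    refine antitone_nat_of_succ_le fun t => mul_le_mul_of_nonneg_left ?_ (by positivity)
    have hdecr := le_sub_mul_norm_gradient_sq_of_lipschitz hf hsmooth hη hLη (θ t)
    rw [← hθ] at hdecr
    linarith [hdecr.trans (sub_le_self _ (by positivity))]
  have hstep (t : ℕ) : 2 * η * (f (θ (t + 1)) - f z) ≤ ‖θ t - z‖ ^ 2 - ‖θ (t + 1) - z‖ ^ 2 := by
    rw [hθ]
    exact hconv.mul_sub_le_norm_sub_sq_sub_norm_sub_sq hf hsmooth hη hLη (θ t) z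
  have := nat_mul_le_sub_of_antitone_of_le_sub hanti hstep T
  linarith

theorem ConvexOn.bddBelow_range_add_mul_norm_sub_sq (hconv : ConvexOn ℝ univ f) {x₀ : E}
    (hx₀ : DifferentiableAt ℝ f x₀) {c : ℝ} (hc : 0 < c) :
    BddBelow (range fun w => f w + c * ‖x₀ - w‖ ^ 2) := by
  set M := ‖gradient f x₀‖
  refine ⟨f x₀ - M ^ 2 / (4 * c), ?_⟩
  rintro _ ⟨w, rfl⟩
  have hfirst := hconv.add_inner_gradient_le hx₀ w
  have hcs : -(M * ‖x₀ - w‖) ≤ ⟪gradient f x₀, w - x₀⟫ := by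
    rw [← norm_sub_rev]
    exact neg_le_of_abs_le (abs_real_inner_le_norm _ _)
  have hsq : 0 ≤ (2 * c * ‖x₀ - w‖ - M) ^ 2 / (4 * c) := by positivity
  have hexpand : (2 * c * ‖x₀ - w‖ - M) ^ 2 / (4 * c) =
      c * ‖x₀ - w‖ ^ 2 - M * ‖x₀ - w‖ + M ^ 2 / (4 * c) := by
    field_simp
    ring
  dsimp only
  linarith

end GradientDescent

theorem gd_training_envelope_general {d : ℕ} (f : EuclideanSpace ℝ (Fin d) → ℝ) (L : ℝ)
    (hconv : ConvexOn ℝ Set.univ f) (hdiff : Differentiable ℝ f)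
    (hsmooth : ∀ x y : EuclideanSpace ℝ (Fin d),
      ‖gradient f x - gradient f y‖ ≤ L * ‖x - y‖)
    (η : ℝ) (hη : 0 < η ∧ η ≤ 1 / L)
    (θ : ℕ → EuclideanSpace ℝ (Fin d))
    (hupd : ∀ t, θ (t + 1) = θ t - η • gradient f (θ t))
    (T : ℕ) (hT : 1 ≤ T) (z : EuclideanSpace ℝ (Fin d)) :
    (⨅ w : EuclideanSpace ℝ (Fin d), (f w + (1 / (η * T)) / 4 * ‖θ 0 - w‖ ^ 2)) ≤
        f (θ T) + (1 / (η * T)) / 4 * ‖θ 0 - θ T‖ ^ 2 ∧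
      f (θ T) + (1 / (η * T)) / 4 * ‖θ 0 - θ T‖ ^ 2 ≤
        f z + (1 / (η * T)) * ‖θ 0 - z‖ ^ 2 := by
  obtain ⟨hη, hηL⟩ := hη
  have hL : 0 < L := one_div_pos.mp (hη.trans_le hηL)
  have hLη : L * η ≤ 1 := by linarith [(le_div_iff₀ hL).mp hηL]
  have hηT : 0 < η * T := mul_pos hη (by exact_mod_cast hT)
  have hrate := hconv.gradientDescent_mul_sub_le hdiff hsmooth hη.le hLη hupd z T
  have htri : ‖θ 0 - θ T‖ ^ 2 ≤ 2 * (‖θ 0 - z‖ ^ 2 + ‖θ T - z‖ ^ 2) := by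
    calc ‖θ 0 - θ T‖ ^ 2 ≤ (‖θ 0 - z‖ + ‖θ T - z‖) ^ 2 := by
          gcongr
          simpa only [dist_eq_norm] using dist_triangle_right (θ 0) (θ T) z
      _ ≤ _ := add_sq_le
  have hgap : f (θ T) - f z ≤ 1 / (η * T) / 2 * (‖θ 0 - z‖ ^ 2 - ‖θ T - z‖ ^ 2) := by
    rw [show ∀ Y : ℝ, 1 / (η * T) / 2 * Y = Y / (2 * η * T) by intro; ring,
      le_div_iff₀ (by positivity)]
    linarith
  refine ⟨ciInf_le (hconv.bddBelow_range_add_mul_norm_sub_sq (hdiff _) (by positivity)) _, ?_⟩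
  linarith [mul_le_mul_of_nonneg_left htri (by positivity : (0 : ℝ) ≤ 1 / (η * T) / 4)]

/-- **Training envelope for gradient descent.**
For convex, differentiable, `L`-smooth `f` and gradient descent iterates with constant step
size `η ∈ (0, 1/L]`, with `λ_T := 1/(ηT)`, the penalized value of the iterate is squeezed
between the minimal value with penalty coefficient `λ_T/4` and, for every `z`, the value
`f z + λ_T ‖θ 0 - z‖²`. -/
theorem gd_training_envelope {d : ℕ} (f : EuclideanSpace ℝ (Fin d) → ℝ) (L : ℝ) (hL : 0 < L)
    (hconv : ConvexOn ℝ Set.univ f) (hdiff : Differentiable ℝ f)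
    (hsmooth : ∀ x y : EuclideanSpace ℝ (Fin d),
      ‖gradient f x - gradient f y‖ ≤ L * ‖x - y‖)
    (η : ℝ) (hη : 0 < η ∧ η ≤ 1 / L)
    (θ : ℕ → EuclideanSpace ℝ (Fin d))
    (hupd : ∀ t, θ (t + 1) = θ t - η • gradient f (θ t))
    (T : ℕ) (hT : 1 ≤ T) (z : EuclideanSpace ℝ (Fin d)) :
    (⨅ w : EuclideanSpace ℝ (Fin d), (f w + (1 / (η * T)) / 4 * ‖θ 0 - w‖ ^ 2)) ≤
        f (θ T) + (1 / (η * T)) / 4 * ‖θ 0 - θ T‖ ^ 2 ∧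
      f (θ T) + (1 / (η * T)) / 4 * ‖θ 0 - θ T‖ ^ 2 ≤
        f z + (1 / (η * T)) * ‖θ 0 - z‖ ^ 2 :=
  gd_training_envelope_general f L hconv hdiff hsmooth η hη θ hupd T hT z
end

section
/- Let f : ℝ^d → ℝ be convex, differentiable, and L-smooth for some L > 0, and let (θ_t) be gradient descent iterates θ_{t+1} = θ_t − η_t ∇f(θ_t) with step sizes η_t ∈ (0, 1/L]. Let S := {θ* ∈ ℝ^d : f(θ*) = inf_{θ ∈ ℝ^d} f(θ)}. If S ≠ ∅ and Σ_{t=0}^∞ η_t = ∞, then θ_t converges to a limit θ_∞ ∈ S; moreover ‖θ_∞ − Proj_S(θ_0)‖₂ ≤ Dist_S(θ_0), and hence ‖θ_∞ − θ_0‖₂ ≤ 2 Dist_S(θ_0). -/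
/-!
For every point `s` and every step size `η ≤ 1/L`, convexity and the descent lemma
`f (x + v) ≤ f x + ⟪∇f x, v⟫ + L/2 ‖v‖²` give
`‖θ (t+1) - s‖² + 2 η t (f (θ (t+1)) - f s) ≤ ‖θ t - s‖²`.
For a minimizer `s` this makes the iterates Fejér monotone with respect to the set of minimizers,
hence bounded. Telescoping, with `f ∘ θ` nonincreasing, gives
`(f (θ T) - f s) ∑_{t<T} η t ≤ ‖θ 0 - s‖² / 2`, so `f (θ T) → min f` and every cluster point is a
minimizer. Fejér monotonicity with respect to such a cluster point forces the whole sequence to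
converge to it, and distances to minimizers never increase, which yields both bounds through a
nearest minimizer.
-/

open RealInnerProductSpace Metric Filter Topology Set

theorem tendsto_zero_of_mul_le_sub {a b η : ℕ → ℝ} (hη : ∀ t, 0 ≤ η t) (ha : Antitone a)
    (ha₀ : ∀ t, 0 ≤ a t) (hb : ∀ t, 0 ≤ b t)
    (hdiv : Tendsto (fun T => ∑ t ∈ Finset.range T, η t) atTop atTop)
    (hdecr : ∀ t, η t * a (t + 1) ≤ b t - b (t + 1)) : Tendsto a atTop (𝓝 0) := by
  have hsum (T : ℕ) : b T + a T * ∑ t ∈ Finset.range T, η t ≤ b 0 := by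
    induction T with
    | zero => simp
    | succ T ih =>
      have hmono : a (T + 1) * ∑ t ∈ Finset.range T, η t ≤ a T * ∑ t ∈ Finset.range T, η t :=
        mul_le_mul_of_nonneg_right (ha T.le_succ) (Finset.sum_nonneg fun t _ => hη t)
      rw [Finset.sum_range_succ]
      linarith [hdecr T]
  refine squeeze_zero' (Eventually.of_forall ha₀) ?_
    ((tendsto_const_nhds (x := b 0)).div_atTop hdiv)
  filter_upwards [hdiv.eventually_gt_atTop 0] with T hT
  rw [le_div_iff₀ hT]
  linarith [hsum T, hb T]

theorem exists_tendsto_of_antitone_dist {X : Type*} [PseudoMetricSpace X] [ProperSpace X]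
    {u : ℕ → X} {S : Set X} {s₀ : X} (hs₀ : s₀ ∈ S)
    (hfejer : ∀ s ∈ S, Antitone fun t => dist (u t) s)
    (hcluster : ∀ w (φ : ℕ → ℕ), StrictMono φ → Tendsto (u ∘ φ) atTop (𝓝 w) → w ∈ S) :
    ∃ w ∈ S, Tendsto u atTop (𝓝 w) := by
  obtain ⟨w, -, φ, hφ, hw⟩ := (isCompact_closedBall s₀ (dist (u 0) s₀)).tendsto_subseq
    fun t => mem_closedBall.2 (hfejer s₀ hs₀ t.zero_le)
  have hwS := hcluster w φ hφ hw
  refine ⟨w, hwS, ?_⟩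
  rw [tendsto_iff_dist_tendsto_zero,
    tendsto_iff_tendsto_subseq_of_antitone (hfejer w hwS) hφ.tendsto_atTop]
  exact tendsto_iff_dist_tendsto_zero.1 hw

theorem dist_le_two_mul_infDist {X : Type*} [PseudoMetricSpace X] [ProperSpace X] {S : Set X}
    (hS : IsClosed S) (hne : S.Nonempty) {x w : X} (hw : ∀ s ∈ S, dist w s ≤ dist x s) :
    dist w x ≤ 2 * infDist x S := by
  obtain ⟨p, hp, hxp⟩ := hS.exists_infDist_eq_dist hne x
  calc dist w x ≤ dist w p + dist x p := dist_triangle_right w x p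
    _ ≤ 2 * infDist x S := by linarith [hw p hp]

section Gradient

variable {E : Type*} [NormedAddCommGroup E] [InnerProductSpace ℝ E] [CompleteSpace E]
  {f : E → ℝ}

theorem HasGradientAt.hasDerivAt_comp_add_smul {x v g : E} {t : ℝ}
    (hf : HasGradientAt f g (x + t • v)) :
    HasDerivAt (fun s : ℝ => f (x + s • v)) ⟪g, v⟫ t := by
  have hline : HasDerivAt (fun s : ℝ => x + s • v) v t := by
    simpa using ((hasDerivAt_id t).smul_const v).const_add x
  simpa [Function.comp_def] using hf.hasFDerivAt.comp_hasDerivAt t hline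

theorem ConvexOn.add_inner_le_of_hasGradientAt {s : Set E} {x y g : E}
    (hf : ConvexOn ℝ s f) (hx : x ∈ s) (hy : y ∈ s) (hg : HasGradientAt f g x) :
    f x + ⟪g, y - x⟫ ≤ f y := by
  have hline : f ∘ AffineMap.lineMap x y = fun t : ℝ => f (x + t • (y - x)) := by
    ext t; simp [AffineMap.lineMap_apply_module', add_comm]
  have hconv := hf.comp_affineMap (AffineMap.lineMap x y)
  rw [hline] at hconv
  have hderiv : HasDerivAt (fun t : ℝ => f (x + t • (y - x))) ⟪g, y - x⟫ 0 :=
    HasGradientAt.hasDerivAt_comp_add_smul (by simpa using hg)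
  have := hconv.le_slope_of_hasDerivAt (by simpa using hx) (by simpa using hy) one_pos hderiv
  simp only [slope_def_field, one_smul, zero_smul, add_zero, sub_zero, div_one,
    add_sub_cancel] at this
  linarith

theorem apply_add_le_of_norm_gradient_sub_le (hf : Differentiable ℝ f) {L : ℝ} {x : E}
    (hsmooth : ∀ y, ‖gradient f y - gradient f x‖ ≤ L * ‖y - x‖) (v : E) :
    f (x + v) ≤ f x + ⟪gradient f x, v⟫ + L / 2 * ‖v‖ ^ 2 := by
  have hderiv (t : ℝ) : HasDerivAt (fun s : ℝ => f (x + s • v)) ⟪gradient f (x + t • v), v⟫ t :=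
    (hf _).hasGradientAt.hasDerivAt_comp_add_smul
  -- compare `t ↦ f (x + t • v)` on `[0, 1]` with a quadratic through their derivatives
  have hmodel (t : ℝ) : HasDerivAt
      (fun s : ℝ => f x + s * ⟪gradient f x, v⟫ + L / 2 * s ^ 2 * ‖v‖ ^ 2)
      (⟪gradient f x, v⟫ + L * t * ‖v‖ ^ 2) t := by
    refine ((((hasDerivAt_id t).mul_const ⟪gradient f x, v⟫).const_add (f x)).add
      (((hasDerivAt_pow 2 t).const_mul (L / 2)).mul_const (‖v‖ ^ 2))).congr_deriv ?_
    simp only [one_mul, Nat.cast_ofNat]; ring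
  have hslope : ∀ t ∈ Ico (0 : ℝ) 1,
      ⟪gradient f (x + t • v), v⟫ ≤ ⟪gradient f x, v⟫ + L * t * ‖v‖ ^ 2 := by
    rintro t ⟨ht, -⟩
    have hnorm := hsmooth (x + t • v)
    rw [add_sub_cancel_left, norm_smul, Real.norm_of_nonneg ht] at hnorm
    calc ⟪gradient f (x + t • v), v⟫
        = ⟪gradient f x, v⟫ + ⟪gradient f (x + t • v) - gradient f x, v⟫ := by
          rw [inner_sub_left]; ring
      _ ≤ ⟪gradient f x, v⟫ + ‖gradient f (x + t • v) - gradient f x‖ * ‖v‖ := by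
          gcongr; exact real_inner_le_norm _ _
      _ ≤ ⟪gradient f x, v⟫ + L * t * ‖v‖ ^ 2 := by
          have := mul_le_mul_of_nonneg_right hnorm (norm_nonneg v)
          nlinarith
  have := image_le_of_deriv_right_le_deriv_boundary
    (fun t _ => (hderiv t).continuousAt.continuousWithinAt)
    (fun t _ => (hderiv t).hasDerivWithinAt) (by simp)
    (fun t _ => (hmodel t).continuousAt.continuousWithinAt)
    (fun t _ => (hmodel t).hasDerivWithinAt) hslope (right_mem_Icc.2 zero_le_one)
  simpa using this

theorem apply_sub_smul_gradient_le (hf : Differentiable ℝ f) {L e : ℝ} {x : E}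
    (hsmooth : ∀ y, ‖gradient f y - gradient f x‖ ≤ L * ‖y - x‖) (he : 0 ≤ e) (hLe : L * e ≤ 1) :
    f (x - e • gradient f x) ≤ f x - e / 2 * ‖gradient f x‖ ^ 2 := by
  have h := apply_add_le_of_norm_gradient_sub_le hf hsmooth (-(e • gradient f x))
  rw [← sub_eq_add_neg, inner_neg_right, real_inner_smul_right, real_inner_self_eq_norm_sq,
    norm_neg, norm_smul, Real.norm_of_nonneg he] at h
  nlinarith [mul_nonneg (mul_nonneg he (sub_nonneg.2 hLe)) (sq_nonneg ‖gradient f x‖)]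

/-- One gradient step towards any point `s`: convexity bounds `f x - f s` by `⟪∇f x, x - s⟫`, and
the descent lemma pays for the quadratic term of the expanded square. -/
theorem norm_sub_smul_gradient_sub_sq_add_le (hconv : ConvexOn ℝ univ f)
    (hf : Differentiable ℝ f) {L e : ℝ} {x : E}
    (hsmooth : ∀ y, ‖gradient f y - gradient f x‖ ≤ L * ‖y - x‖) (he : 0 ≤ e) (hLe : L * e ≤ 1)
    (s : E) :
    ‖x - e • gradient f x - s‖ ^ 2 + 2 * e * (f (x - e • gradient f x) - f s) ≤ ‖x - s‖ ^ 2 := by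
  have hdescent := apply_sub_smul_gradient_le hf hsmooth he hLe
  have hfirst := hconv.add_inner_le_of_hasGradientAt (mem_univ x) (mem_univ s)
    (hf x).hasGradientAt
  have hexpand : ‖x - e • gradient f x - s‖ ^ 2 = ‖x - s‖ ^ 2
      - 2 * e * ⟪gradient f x, x - s⟫ + e ^ 2 * ‖gradient f x‖ ^ 2 := by
    rw [sub_right_comm, norm_sub_sq_real, real_inner_smul_right, real_inner_comm, norm_smul,
      mul_pow, Real.norm_eq_abs, sq_abs]
    ring
  have hinner : ⟪gradient f x, s - x⟫ = -⟪gradient f x, x - s⟫ := by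
    rw [← inner_neg_right, neg_sub]
  rw [hexpand]
  nlinarith

structure IsGradientDescent (f : E → ℝ) (L : ℝ) (η : ℕ → ℝ) (θ : ℕ → E) : Prop where
  step_nonneg : ∀ t, 0 ≤ η t
  mul_step_le_one : ∀ t, L * η t ≤ 1
  update : ∀ t, θ (t + 1) = θ t - η t • gradient f (θ t)

namespace IsGradientDescent

variable {L : ℝ} {η : ℕ → ℝ} {θ : ℕ → E}

theorem antitone_apply (h : IsGradientDescent f L η θ) (hf : Differentiable ℝ f)
    (hsmooth : ∀ x y, ‖gradient f x - gradient f y‖ ≤ L * ‖x - y‖) : Antitone (f ∘ θ) :=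
  antitone_nat_of_succ_le fun t => by
    have hdescent := apply_sub_smul_gradient_le hf (fun y => hsmooth y (θ t)) (h.step_nonneg t)
      (h.mul_step_le_one t)
    simp only [Function.comp_apply, h.update t]
    nlinarith [h.step_nonneg t, sq_nonneg ‖gradient f (θ t)‖]

theorem norm_sub_sq_add_le (h : IsGradientDescent f L η θ) (hconv : ConvexOn ℝ univ f)
    (hf : Differentiable ℝ f) (hsmooth : ∀ x y, ‖gradient f x - gradient f y‖ ≤ L * ‖x - y‖)
    (t : ℕ) (s : E) :
    ‖θ (t + 1) - s‖ ^ 2 + 2 * η t * (f (θ (t + 1)) - f s) ≤ ‖θ t - s‖ ^ 2 := by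
  rw [h.update t]
  exact norm_sub_smul_gradient_sub_sq_add_le hconv hf (fun y => hsmooth y _) (h.step_nonneg t)
    (h.mul_step_le_one t) s

theorem antitone_dist_of_isMin (h : IsGradientDescent f L η θ) (hconv : ConvexOn ℝ univ f)
    (hf : Differentiable ℝ f) (hsmooth : ∀ x y, ‖gradient f x - gradient f y‖ ≤ L * ‖x - y‖)
    {s : E} (hs : ∀ x, f s ≤ f x) : Antitone fun t => dist (θ t) s :=
  antitone_nat_of_succ_le fun t => by
    rw [dist_eq_norm, dist_eq_norm, ← sq_le_sq₀ (norm_nonneg _) (norm_nonneg _)]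
    nlinarith [h.norm_sub_sq_add_le hconv hf hsmooth t s, hs (θ (t + 1)), h.step_nonneg t]

theorem tendsto_apply_of_isMin (h : IsGradientDescent f L η θ) (hconv : ConvexOn ℝ univ f)
    (hf : Differentiable ℝ f) (hsmooth : ∀ x y, ‖gradient f x - gradient f y‖ ≤ L * ‖x - y‖)
    (hdiv : Tendsto (fun T => ∑ t ∈ Finset.range T, η t) atTop atTop)
    {s : E} (hs : ∀ x, f s ≤ f x) : Tendsto (fun t => f (θ t)) atTop (𝓝 (f s)) := by
  have hgap : Tendsto (fun t => f (θ t) - f s) atTop (𝓝 0) :=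
    tendsto_zero_of_mul_le_sub (η := fun t => 2 * η t) (b := fun t => ‖θ t - s‖ ^ 2)
      (fun t => by linarith [h.step_nonneg t])
      (fun _ _ hts => sub_le_sub_right (h.antitone_apply hf hsmooth hts) _)
      (fun t => sub_nonneg.2 (hs _)) (fun t => sq_nonneg _)
      (by simpa [← Finset.mul_sum] using hdiv.const_mul_atTop two_pos)
      (fun t => by linarith [h.norm_sub_sq_add_le hconv hf hsmooth t s])
  simpa using hgap.add_const (f s)

theorem exists_tendsto_isMin [ProperSpace E] (h : IsGradientDescent f L η θ)
    (hconv : ConvexOn ℝ univ f) (hf : Differentiable ℝ f)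
    (hsmooth : ∀ x y, ‖gradient f x - gradient f y‖ ≤ L * ‖x - y‖)
    (hdiv : Tendsto (fun T => ∑ t ∈ Finset.range T, η t) atTop atTop)
    {s₀ : E} (hs₀ : ∀ x, f s₀ ≤ f x) :
    ∃ w, (∀ x, f w ≤ f x) ∧ Tendsto θ atTop (𝓝 w) := by
  refine exists_tendsto_of_antitone_dist (S := {s | ∀ x, f s ≤ f x}) hs₀
    (fun s hs => h.antitone_dist_of_isMin hconv hf hsmooth hs) fun w φ hφ hθφ x => ?_
  have hfw : Tendsto (fun k => f (θ (φ k))) atTop (𝓝 (f w)) :=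
    (hf.continuous.tendsto w).comp hθφ
  have hfs₀ := (h.tendsto_apply_of_isMin hconv hf hsmooth hdiv hs₀).comp hφ.tendsto_atTop
  rw [tendsto_nhds_unique hfw hfs₀]
  exact hs₀ x

end IsGradientDescent

end Gradient

/-- **Limit of gradient descent iterates.**
For convex, differentiable, `L`-smooth `f` and gradient descent iterates with step sizes
`η t ∈ (0, 1/L]` satisfying `Σ η t = ∞`, if the set `S` of global minimizers is nonempty,
then `θ t` converges to some `θ∞ ∈ S`, with `‖θ∞ - Proj_S(θ 0)‖ ≤ dist(θ 0, S)` (for the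
Euclidean projection `Proj_S(θ 0)`, i.e. any point of `S` closest to `θ 0`) and hence
`‖θ∞ - θ 0‖ ≤ 2 dist(θ 0, S)`. -/
theorem gd_limit_of_iterates {d : ℕ} (f : EuclideanSpace ℝ (Fin d) → ℝ)
    (L : ℝ) (hL : 0 < L)
    (hconv : ConvexOn ℝ Set.univ f) (hdiff : Differentiable ℝ f)
    (hsmooth : ∀ x y : EuclideanSpace ℝ (Fin d),
      ‖gradient f x - gradient f y‖ ≤ L * ‖x - y‖)
    (η : ℕ → ℝ) (hη : ∀ t, 0 < η t ∧ η t ≤ 1 / L)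
    (θ : ℕ → EuclideanSpace ℝ (Fin d))
    (hupd : ∀ t, θ (t + 1) = θ t - η t • gradient f (θ t))
    (hS : ∃ s : EuclideanSpace ℝ (Fin d), ∀ x, f s ≤ f x)
    (hdiv : Tendsto (fun T => ∑ t ∈ Finset.range T, η t) atTop atTop) :
    ∃ θlim : EuclideanSpace ℝ (Fin d),
      (∀ x, f θlim ≤ f x) ∧
      Tendsto θ atTop (nhds θlim) ∧
      (∀ p : EuclideanSpace ℝ (Fin d), (∀ x, f p ≤ f x) →
        (∀ s : EuclideanSpace ℝ (Fin d), (∀ x, f s ≤ f x) → ‖θ 0 - p‖ ≤ ‖θ 0 - s‖) →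
        ‖θlim - p‖ ≤ Metric.infDist (θ 0) {s : EuclideanSpace ℝ (Fin d) | ∀ x, f s ≤ f x}) ∧
      ‖θlim - θ 0‖ ≤
        2 * Metric.infDist (θ 0) {s : EuclideanSpace ℝ (Fin d) | ∀ x, f s ≤ f x} := by
  obtain ⟨s₀, hs₀⟩ := hS
  set S := {s : EuclideanSpace ℝ (Fin d) | ∀ x, f s ≤ f x}
  have hgd : IsGradientDescent f L η θ :=
    ⟨fun t => (hη t).1.le, fun t => by linarith [(le_div_iff₀ hL).1 (hη t).2], hupd⟩
  obtain ⟨w, hw, hθw⟩ := hgd.exists_tendsto_isMin hconv hdiff hsmooth hdiv hs₀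
  have hlimit : ∀ s ∈ S, dist w s ≤ dist (θ 0) s := fun s hs =>
    (hgd.antitone_dist_of_isMin hconv hdiff hsmooth hs).le_of_tendsto
      (hθw.dist tendsto_const_nhds) 0
  have hSclosed : IsClosed S := by
    simp only [S, Set.ofPred_forall]
    exact isClosed_iInter fun x => isClosed_le hdiff.continuous continuous_const
  refine ⟨w, hw, hθw, fun p hp hnear => ?_, ?_⟩
  · rw [← dist_eq_norm]
    calc dist w p ≤ dist (θ 0) p := hlimit p hp
      _ ≤ infDist (θ 0) S := (le_infDist (s := S) ⟨s₀, hs₀⟩).2 fun s hs => by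
          simpa only [dist_eq_norm] using hnear s hs
  · rw [← dist_eq_norm]
    exact dist_le_two_mul_infDist hSclosed ⟨s₀, hs₀⟩ hlimit
end

section
/- Fix X ∈ ℝ^{n×d}, vectors Y, μ ∈ ℝ^n, and set ε := Y − μ. Let A : ℝ → ℝ be any function and write A(v) := Σ_{i=1}^n A(v_i) for v ∈ ℝ^n. Define the GLM loss ℓ(θ) := (1/n)(−YᵀXθ + A(Xθ)) and the prediction risk Risk(θ) := (1/n)(−μᵀXθ + A(Xθ)). Let λ > 0 and let θ̂_λ ∈ ℝ^d be a minimizer of θ ↦ ℓ(θ) + λ‖θ‖₂² over ℝ^d. Then for every θ ∈ ℝ^d: Risk(θ̂_λ) ≤ Risk(θ) + (1/(2λ))‖Xᵀε/n‖₂² + 2λ‖θ‖₂². -/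
open Finset

/-- The GLM objective `(1/n) (−Yᵀ(Xθ) + Σ_i A((Xθ)_i))`.  With `Y` the response vector it
is the GLM loss `ℓ`; with the mean vector `μ` in place of `Y` it is the prediction risk. -/
noncomputable def glmObj {n d : ℕ} (X : Matrix (Fin n) (Fin d) ℝ) (Y : Fin n → ℝ)
    (A : ℝ → ℝ) (θ : Fin d → ℝ) : ℝ :=
  (1 / (n : ℝ)) * (-(∑ i, Y i * X.mulVec θ i) + ∑ i, A (X.mulVec θ i))

lemma glm_risk_loss {n d : ℕ} (X : Matrix (Fin n) (Fin d) ℝ) (Y μ : Fin n → ℝ)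
    (A : ℝ → ℝ) (θ : Fin d → ℝ) :
    glmObj X μ A θ = glmObj X Y A θ
      + ∑ j, (X.transpose.mulVec (fun i => Y i - μ i) j / n) * θ j := by
  have key : ∑ j, (X.transpose.mulVec (fun i => Y i - μ i) j / n) * θ j
      = (1 / (n : ℝ)) * ∑ i, (Y i - μ i) * X.mulVec θ i := by
    simp only [Matrix.mulVec, dotProduct, Matrix.transpose_apply]
    rw [Finset.mul_sum]
    rw [show (∑ j, (∑ i, X i j * (Y i - μ i)) / (n:ℝ) * θ j)
        = ∑ j, ∑ i, X i j * (Y i - μ i) / (n:ℝ) * θ j from by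
      simp [Finset.sum_div, Finset.sum_mul]]
    rw [Finset.sum_comm]
    congr 1; ext i
    rw [Finset.mul_sum, Finset.mul_sum]
    exact Finset.sum_congr rfl fun j _ => by ring
  simp only [glmObj, key, sub_mul]
  rw [Finset.sum_sub_distrib]
  ring

/-- **Risk bound for the ridge-regularized GLM estimator.**
Fix `X ∈ ℝ^{n×d}`, `Y, μ ∈ ℝ^n`, `ε := Y - μ`, a cumulant `A`, and `lam > 0`. If `θhat`
minimizes `ℓ(θ) + lam ‖θ‖₂²` over `ℝ^d`, then for every `θ`:
`Risk(θhat) ≤ Risk(θ) + (1/(2·lam)) ‖Xᵀε/n‖₂² + 2·lam·‖θ‖₂²`. -/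
theorem ridge_glm_risk_bound {n d : ℕ} (hn : 0 < n)
    (X : Matrix (Fin n) (Fin d) ℝ) (Y μ : Fin n → ℝ) (A : ℝ → ℝ)
    (lam : ℝ) (hlam : 0 < lam)
    (θhat : Fin d → ℝ)
    (hmin : ∀ θ : Fin d → ℝ,
      glmObj X Y A θhat + lam * ∑ j, θhat j ^ 2 ≤ glmObj X Y A θ + lam * ∑ j, θ j ^ 2)
    (θ : Fin d → ℝ) :
    glmObj X μ A θhat ≤ glmObj X μ A θ
      + 1 / (2 * lam) * ∑ j, (X.transpose.mulVec (fun i => Y i - μ i) j / n) ^ 2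
      + 2 * lam * ∑ j, θ j ^ 2 := by
  set v : Fin d → ℝ := fun j => X.transpose.mulVec (fun i => Y i - μ i) j / n with hv
  have young : ∀ (w : Fin d → ℝ),
      ∑ j, v j * w j ≤ (1 / (4 * lam)) * ∑ j, v j ^ 2 + lam * ∑ j, w j ^ 2 := by
    intro w
    rw [Finset.mul_sum, Finset.mul_sum, ← Finset.sum_add_distrib]
    apply Finset.sum_le_sum
    intro j _
    have hlam' : lam ≠ 0 := ne_of_gt hlam
    have h : (1/(4*lam)) * v j ^ 2 + lam * w j ^ 2 - v j * w j
        = (v j - 2*lam*w j)^2 / (4*lam) := by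
      field_simp; ring
    have h2 : (0:ℝ) ≤ (v j - 2*lam*w j)^2 / (4*lam) :=
      div_nonneg (sq_nonneg _) (by linarith)
    linarith
  have h1 : glmObj X μ A θhat = glmObj X Y A θhat + ∑ j, v j * θhat j :=
    glm_risk_loss X Y μ A θhat
  have h2 : glmObj X μ A θ = glmObj X Y A θ + ∑ j, v j * θ j :=
    glm_risk_loss X Y μ A θ
  have h3 := hmin θ
  have h4 := young θhat
  have h5 := young (fun j => -θ j)
  simp only [mul_neg, neg_sq] at h5
  rw [Finset.sum_neg_distrib] at h5
  have key : 1 / (2 * lam) = 1 / (4 * lam) + 1 / (4 * lam) := by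
    field_simp; ring
  show glmObj X μ A θhat ≤ glmObj X μ A θ + 1 / (2 * lam) * ∑ j, v j ^ 2
      + 2 * lam * ∑ j, θ j ^ 2
  rw [h1, h2, key, add_mul]
  have hθhat : (0:ℝ) ≤ lam * ∑ j, θhat j ^ 2 :=
    mul_nonneg hlam.le (Finset.sum_nonneg fun j _ => sq_nonneg _)
  linarith
end

section
/- Fix X ∈ ℝ^{n×d}, vectors Y, μ ∈ ℝ^n, and set ε := Y − μ. Let A : ℝ → ℝ be convex, A(v) := Σ_{i=1}^n A(v_i), ℓ(θ) := (1/n)(−YᵀXθ + A(Xθ)), Risk(θ) := (1/n)(−μᵀXθ + A(Xθ)). Assume ℓ is L-smooth on ℝ^d (respectively, on the closed Euclidean ball B_d(b) of radius b > 0). Let θ_T be the T-th iterate of gradient descent θ_{t+1} = θ_t − η∇ℓ(θ_t) (respectively, of projected gradient descent θ_{t+1} = Proj_{B_d(b)}(θ_t − η∇ℓ(θ_t))), initialized at θ_0 = 0 with constant step size η ∈ (0, 1/L], and set λ_T := 1/(ηT). Then for every T ≥ 1 and every θ ∈ ℝ^d (respectively, every θ ∈ B_d(b)): Risk(θ_T)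 ≤ Risk(θ) + (1/(2λ_T))‖Xᵀε/n‖₂² + (λ_T/2)‖θ‖₂². -/
/-!
Projected gradient descent with step `η ≤ 1/L` on a convex `L`-smooth function satisfies, at
every step and against every comparator `w ∈ C`,
`f x_{t+1} ≤ f w + (‖x_t - w‖² - ‖x_{t+1} - w‖²) / (2η)`: the descent lemma bounds `f x_{t+1}`
by the quadratic model at `x_t`, convexity bounds `f x_t` by `f w` minus the linear term, and the
variational inequality of the projection turns what is left into a difference of squares.
Summing telescopes, and since the values decrease, `f x_T` is at most the average. For the GLM the
risk is the loss plus the linear term `⟪Xᵀε/n, θ⟫`; Young's inequality with weight `ηT` absorbs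
`⟪Xᵀε/n, θ_T - θ⟫` into the kept `-‖θ_T - θ‖²/(2ηT)`.
-/

open Finset

/-- The gradient of `g : ℝ^d → ℝ` in coordinates, `(∇g(x))_j = (Dg(x))(e_j)`. -/
noncomputable def piGrad {d : ℕ} (g : (Fin d → ℝ) → ℝ) (x : Fin d → ℝ) : Fin d → ℝ :=
  fun j => fderiv ℝ g x (Pi.single j 1)

open InnerProductSpace WithLp Matrix
open scoped RealInnerProductSpace

section FirstOrder

variable {F : Type*} [NormedAddCommGroup F] [NormedSpace ℝ F] {f : F → ℝ} {s : Set F} {x y : F}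

theorem ConvexOn.add_fderiv_sub_le {f' : F →L[ℝ] ℝ} (hf : ConvexOn ℝ s f) (hx : x ∈ s)
    (hy : y ∈ s) (hd : HasFDerivAt f f' x) : f x + f' (y - x) ≤ f y := by
  have hline : ConvexOn ℝ (Set.Icc (0 : ℝ) 1) (f ∘ AffineMap.lineMap (k := ℝ) x y) :=
    (hf.comp_affineMap _).subset (fun t ht => hf.1.lineMap_mem hx hy ht) (convex_Icc 0 1)
  have hderiv : HasDerivAt (f ∘ AffineMap.lineMap (k := ℝ) x y) (f' (y - x)) 0 :=
    hd.comp_hasDerivAt_of_eq (0 : ℝ) AffineMap.hasDerivAt_lineMap (by simp)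
  have := hline.le_slope_of_hasDerivAt (Set.left_mem_Icc.2 zero_le_one)
    (Set.right_mem_Icc.2 zero_le_one) zero_lt_one hderiv
  simp only [slope_def_field, Function.comp_apply, AffineMap.lineMap_apply_zero,
    AffineMap.lineMap_apply_one, sub_zero, div_one] at this
  linarith

theorem Convex.image_le_of_lipschitz_fderiv {f' : F → F →L[ℝ] ℝ} {L : ℝ} (hs : Convex ℝ s)
    (hf : ∀ z ∈ s, HasFDerivAt f (f' z) z) (hL : ∀ z ∈ s, ‖f' z - f' x‖ ≤ L * ‖z - x‖)
    (hx : x ∈ s) (hy : y ∈ s) :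
    f y ≤ f x + f' x (y - x) + L / 2 * ‖y - x‖ ^ 2 := by
  set γ := AffineMap.lineMap (k := ℝ) x y
  have hγ : ∀ t ∈ Set.Icc (0 : ℝ) 1, γ t ∈ s := fun t ht => hs.lineMap_mem hx hy ht
  have hderiv : ∀ t ∈ Set.Icc (0 : ℝ) 1, HasDerivAt (f ∘ γ) (f' (γ t) (y - x)) t :=
    fun t ht => (hf _ (hγ t ht)).comp_hasDerivAt t AffineMap.hasDerivAt_lineMap
  have hbound : ∀ t ∈ Set.Icc (0 : ℝ) 1,
      f' (γ t) (y - x) ≤ f' x (y - x) + L * t * ‖y - x‖ ^ 2 := by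
    intro t ht
    have hγx : γ t - x = t • (y - x) := AffineMap.lineMap_vsub_left x y t
    calc f' (γ t) (y - x) = f' x (y - x) + (f' (γ t) - f' x) (y - x) := by simp
      _ ≤ f' x (y - x) + ‖f' (γ t) - f' x‖ * ‖y - x‖ := by
          gcongr; exact (Real.le_norm_self _).trans (ContinuousLinearMap.le_opNorm _ _)
      _ ≤ f' x (y - x) + L * ‖γ t - x‖ * ‖y - x‖ := by
          gcongr; exact hL _ (hγ t ht)
      _ = f' x (y - x) + L * t * ‖y - x‖ ^ 2 := by
          rw [hγx, norm_smul, Real.norm_of_nonneg ht.1]; ring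
  have hB : ∀ t : ℝ, HasDerivAt (fun t => f x + t * f' x (y - x) + L / 2 * ‖y - x‖ ^ 2 * t ^ 2)
      (f' x (y - x) + L * t * ‖y - x‖ ^ 2) t := by
    intro t
    refine ((((hasDerivAt_id' t).mul_const (f' x (y - x))).const_add (f x)).fun_add
      ((hasDerivAt_pow 2 t).const_mul (L / 2 * ‖y - x‖ ^ 2))).congr_deriv ?_
    norm_num; ring
  have key := image_le_of_deriv_right_le_deriv_boundary (f := f ∘ γ) (a := 0) (b := 1)
    (fun t ht => (hderiv t ht).continuousAt.continuousWithinAt)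
    (fun t ht => (hderiv t (Set.Ico_subset_Icc_self ht)).hasDerivWithinAt)
    (B := fun t => f x + t * f' x (y - x) + L / 2 * ‖y - x‖ ^ 2 * t ^ 2)
    (by simp [γ]) (fun t _ => (hB t).continuousAt.continuousWithinAt)
    (fun t _ => (hB t).hasDerivWithinAt)
    (fun t ht => hbound t (Set.Ico_subset_Icc_self ht)) (Set.right_mem_Icc.2 zero_le_one)
  simpa [γ] using key

end FirstOrder

section ProjectedGradient

variable {E : Type*} [NormedAddCommGroup E] [InnerProductSpace ℝ E]

theorem Convex.inner_sub_nonpos_of_isMinOn {C : Set E} {p z w : E} (hC : Convex ℝ C)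
    (hp : p ∈ C) (hmin : IsMinOn (‖· - z‖) C p) (hw : w ∈ C) : ⟪z - p, w - p⟫ ≤ 0 := by
  refine (norm_eq_iInf_iff_real_inner_le_zero hC hp).1 ?_ w hw
  have : Nonempty C := ⟨⟨p, hp⟩⟩
  refine le_antisymm (le_ciInf fun u => ?_) (ciInf_le ⟨0, ?_⟩ (⟨p, hp⟩ : C))
  · rw [norm_sub_rev, norm_sub_rev z]
    exact hmin u.2
  · rintro _ ⟨u, rfl⟩
    positivity

def IsProjGradDescent (C : Set E) (g : E → E) (η : ℝ) (x : ℕ → E) : Prop :=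
  ∀ t, x (t + 1) ∈ C ∧ IsMinOn (‖· - (x t - η • g (x t))‖) C (x (t + 1))

variable [CompleteSpace E] {f : E → ℝ} {g : E → E} {C : Set E} {L η : ℝ}

theorem projGradStep_le (hC : Convex ℝ C) (hf : ConvexOn ℝ C f)
    (hg : ∀ z ∈ C, HasGradientAt f (g z) z) {x p w : E}
    (hL : ∀ z ∈ C, ‖g z - g x‖ ≤ L * ‖z - x‖) (hη : 0 < η) (hηL : η * L ≤ 1)
    (hx : x ∈ C) (hp : p ∈ C) (hmin : IsMinOn (‖· - (x - η • g x)‖) C p) (hw : w ∈ C) :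
    f p ≤ f w + (‖x - w‖ ^ 2 - ‖p - w‖ ^ 2) / (2 * η) := by
  have hdescent : f p ≤ f x + ⟪g x, p - x⟫ + L / 2 * ‖p - x‖ ^ 2 := by
    refine hC.image_le_of_lipschitz_fderiv (fun z hz => (hg z hz).hasFDerivAt)
      (fun z hz => ?_) hx hp
    rw [← map_sub, LinearIsometryEquiv.norm_map]
    exact hL z hz
  have hsupport : f x + ⟪g x, w - x⟫ ≤ f w := hf.add_fderiv_sub_le hx hw (hg x hx).hasFDerivAt
  have hproj : ⟪x - η • g x - p, w - p⟫ ≤ 0 := hC.inner_sub_nonpos_of_isMinOn hp hmin hw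
  have hpolar : ‖x - w‖ ^ 2 = ‖x - p‖ ^ 2 + 2 * ⟪x - p, p - w⟫ + ‖p - w‖ ^ 2 := by
    rw [← norm_add_sq_real, sub_add_sub_cancel]
  have hangle : η * ⟪g x, p - w⟫ ≤ ⟪x - p, p - w⟫ := by
    rw [show x - η • g x - p = (x - p) - η • g x by abel, inner_sub_left, real_inner_smul_left,
      ← neg_sub p w, inner_neg_right, inner_neg_right] at hproj
    linarith
  have hgap : f p - f w ≤ ⟪g x, p - w⟫ + L / 2 * ‖p - x‖ ^ 2 := by
    rw [show p - w = (p - x) - (w - x) by abel, inner_sub_right]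
    linarith
  rw [← sub_le_iff_le_add', le_div_iff₀ (by positivity)]
  rw [norm_sub_rev p x] at hgap
  nlinarith [mul_le_mul_of_nonneg_left hgap (by positivity : (0 : ℝ) ≤ 2 * η),
    mul_le_mul_of_nonneg_right hηL (sq_nonneg ‖x - p‖)]

theorem IsProjGradDescent.le_add_norm_sq_div {x : ℕ → E} (hx : IsProjGradDescent C g η x)
    (hC : Convex ℝ C) (hf : ConvexOn ℝ C f) (hg : ∀ z ∈ C, HasGradientAt f (g z) z)
    (hL : ∀ y ∈ C, ∀ z ∈ C, ‖g y - g z‖ ≤ L * ‖y - z‖) (hη : 0 < η) (hηL : η * L ≤ 1)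
    (hx0 : x 0 ∈ C) {w : E} (hw : w ∈ C) {T : ℕ} (hT : 0 < T) :
    f (x T) ≤ f w + (‖x 0 - w‖ ^ 2 - ‖x T - w‖ ^ 2) / (2 * η * T) := by
  have hmem : ∀ t, x t ∈ C := fun t => t.casesOn hx0 fun t => (hx t).1
  have hstep : ∀ t, ∀ w ∈ C,
      f (x (t + 1)) ≤ f w + (‖x t - w‖ ^ 2 - ‖x (t + 1) - w‖ ^ 2) / (2 * η) :=
    fun t w hw => projGradStep_le hC hf hg (fun z hz => hL z hz _ (hmem t)) hη hηL (hmem t)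
      (hx t).1 (hx t).2 hw
  have hanti : Antitone (f ∘ x) := by
    refine antitone_nat_of_succ_le fun t => ?_
    have h := hstep t (x t) (hmem t)
    have : 0 ≤ ‖x (t + 1) - x t‖ ^ 2 / (2 * η) := by positivity
    rw [sub_self, norm_zero, zero_pow two_ne_zero, zero_sub, neg_div] at h
    simp only [Function.comp_apply]
    linarith
  have hsum : ∑ t ∈ range T, f (x (t + 1))
      ≤ T * f w + (‖x 0 - w‖ ^ 2 - ‖x T - w‖ ^ 2) / (2 * η) := calc
    _ ≤ ∑ t ∈ range T, (f w + (‖x t - w‖ ^ 2 - ‖x (t + 1) - w‖ ^ 2) / (2 * η)) :=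
      sum_le_sum fun t _ => hstep t w hw
    _ = _ := by
      rw [sum_add_distrib, ← sum_div, sum_range_sub' (fun t => ‖x t - w‖ ^ 2)]
      simp
  have hlast : T * f (x T) ≤ ∑ t ∈ range T, f (x (t + 1)) := by
    simpa using card_nsmul_le_sum (range T) _ _ fun t ht => hanti (mem_range.1 ht)
  have hT' : (0 : ℝ) < T := by exact_mod_cast hT
  rw [← sub_le_iff_le_add', ← div_div, le_div_iff₀ hT']
  linarith

end ProjectedGradient

theorem EuclideanSpace.preimage_ofLp_setOf_sqrt_sum_sq_le {ι : Type*} [Fintype ι] (b : ℝ) :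
    (ofLp ⁻¹' {θ : ι → ℝ | √(∑ j, θ j ^ 2) ≤ b} : Set (EuclideanSpace ℝ ι))
      = Metric.closedBall 0 b := by
  ext u
  simp [EuclideanSpace.norm_eq]

theorem hasGradientAt_comp_ofLp {d : ℕ} {g : (Fin d → ℝ) → ℝ} {x : Fin d → ℝ}
    (hg : DifferentiableAt ℝ g x) :
    HasGradientAt (g ∘ ofLp) (toLp 2 (piGrad g x)) (toLp 2 x) := by
  have h := hg.hasFDerivAt.comp (toLp 2 x) (EuclideanSpace.equiv (Fin d) ℝ).hasFDerivAt
  refine hasGradientAt_iff_hasFDerivAt.2 (h.congr_fderiv ?_)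
  refine ContinuousLinearMap.ext fun v => ?_
  rw [ContinuousLinearMap.comp_apply, ContinuousLinearEquiv.coe_coe,
    show (EuclideanSpace.equiv (Fin d) ℝ) v = ofLp v from rfl, ← Finset.univ_sum_single (ofLp v)]
  simp only [map_sum, toDual_apply_apply, PiLp.inner_apply, piGrad]
  refine Finset.sum_congr rfl fun j _ => ?_
  rw [← mul_one (ofLp v j), ← smul_eq_mul, Pi.single_smul', map_smul, smul_eq_mul]
  simp [mul_comm]

theorem convexOn_univ_sum_apply {ι : Type*} [Fintype ι] {φ : ι → ℝ → ℝ}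
    (hφ : ∀ i, ConvexOn ℝ Set.univ (φ i)) :
    ConvexOn ℝ Set.univ fun u : ι → ℝ => ∑ i, φ i (u i) := by
  refine ⟨convex_univ, fun u _ v _ a b ha hb hab => ?_⟩
  simp only [Pi.add_apply, Pi.smul_apply, smul_eq_mul, mul_sum, ← sum_add_distrib]
  exact sum_le_sum fun i _ => (hφ i).2 trivial trivial ha hb hab

theorem glmObj_convexOn {n d : ℕ} (X : Matrix (Fin n) (Fin d) ℝ) (Y : Fin n → ℝ) {A : ℝ → ℝ}
    (hA : ConvexOn ℝ Set.univ A) : ConvexOn ℝ Set.univ (glmObj X Y A) := by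
  have hsep : ConvexOn ℝ Set.univ fun u : Fin n → ℝ => (1 / n : ℝ) • ∑ i, (A (u i) - Y i * u i) :=
    (convexOn_univ_sum_apply fun i =>
      hA.sub ((LinearMap.mulLeft ℝ (Y i)).concaveOn convex_univ)).smul (by positivity)
  have h := hsep.comp_linearMap X.mulVecLin
  rw [Set.preimage_univ] at h
  refine h.congr fun θ _ => ?_
  simp only [glmObj, Function.comp_apply, Matrix.mulVecLin_apply, smul_eq_mul, sum_sub_distrib]
  ring

theorem glmObj_eq_add_dotProduct {n d : ℕ} (X : Matrix (Fin n) (Fin d) ℝ) (Y μ : Fin n → ℝ)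
    (A : ℝ → ℝ) (θ : Fin d → ℝ) :
    glmObj X μ A θ = glmObj X Y A θ + (fun j => (Xᵀ *ᵥ fun i => Y i - μ i) j / n) ⬝ᵥ θ := by
  have hv : (fun j => (Xᵀ *ᵥ fun i => Y i - μ i) j / n) = (1 / n : ℝ) • (Y - μ) ᵥ* X := by
    funext j
    rw [Pi.smul_apply, smul_eq_mul, one_div, inv_mul_eq_div, mulVec_transpose]
    rfl
  rw [hv, smul_dotProduct, ← dotProduct_mulVec, sub_dotProduct]
  simp only [glmObj, dotProduct, smul_eq_mul]
  ring

section Young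

variable {E : Type*} [NormedAddCommGroup E] [InnerProductSpace ℝ E]

theorem real_inner_le_young {a : ℝ} (ha : 0 < a) (u v : E) :
    ⟪u, v⟫ ≤ a / 2 * ‖u‖ ^ 2 + ‖v‖ ^ 2 / (2 * a) := by
  have hsq : 0 ≤ (a * ‖u‖ - ‖v‖) ^ 2 / (2 * a) := by positivity
  have hexpand : (a * ‖u‖ - ‖v‖) ^ 2 / (2 * a)
      = a / 2 * ‖u‖ ^ 2 + ‖v‖ ^ 2 / (2 * a) - ‖u‖ * ‖v‖ := by
    field_simp
    ring
  linarith [real_inner_le_norm u v]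

end Young

theorem glmObj_risk_le_of_loss_le {n d : ℕ} (X : Matrix (Fin n) (Fin d) ℝ) (Y μ : Fin n → ℝ)
    (A : ℝ → ℝ) {p θ : Fin d → ℝ} {a : ℝ} (ha : 0 < a)
    (h : glmObj X Y A p ≤ glmObj X Y A θ + (∑ j, θ j ^ 2 - ∑ j, (p - θ) j ^ 2) / (2 * a)) :
    glmObj X μ A p ≤ glmObj X μ A θ
      + a / 2 * ∑ j, (Xᵀ.mulVec (fun i => Y i - μ i) j / n) ^ 2 + 1 / a / 2 * ∑ j, θ j ^ 2 := by
  set v : Fin d → ℝ := fun j => Xᵀ.mulVec (fun i => Y i - μ i) j / n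
  have hyoung := real_inner_le_young ha (toLp 2 v) (toLp 2 (p - θ))
  rw [EuclideanSpace.inner_toLp_toLp, star_trivial, dotProduct_comm, dotProduct_sub,
    EuclideanSpace.real_norm_sq_eq, EuclideanSpace.real_norm_sq_eq] at hyoung
  rw [glmObj_eq_add_dotProduct X Y μ A p, glmObj_eq_add_dotProduct X Y μ A θ]
  linear_combination h + hyoung

theorem gd_glm_risk_bound_general {n d : ℕ}
    (X : Matrix (Fin n) (Fin d) ℝ) (Y μ : Fin n → ℝ)
    (A : ℝ → ℝ) (hA : ConvexOn ℝ Set.univ A)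
    (C : Set (Fin d → ℝ)) (b : ℝ)
    (hC : C = Set.univ ∨ (0 < b ∧ C = {θ | Real.sqrt (∑ j, θ j ^ 2) ≤ b}))
    (hdiff : ∀ θ ∈ C, DifferentiableAt ℝ (glmObj X Y A) θ)
    (L : ℝ)
    (hsmooth : ∀ x ∈ C, ∀ y ∈ C,
      Real.sqrt (∑ j, (piGrad (glmObj X Y A) x j - piGrad (glmObj X Y A) y j) ^ 2) ≤
        L * Real.sqrt (∑ j, (x j - y j) ^ 2))
    (η : ℝ) (hη : 0 < η ∧ η ≤ 1 / L)
    (θseq : ℕ → Fin d → ℝ) (hθ0 : θseq 0 = 0)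
    (hupd : ∀ t, θseq (t + 1) ∈ C ∧ ∀ w ∈ C,
      Real.sqrt (∑ j, (θseq (t + 1) j -
          (θseq t j - η * piGrad (glmObj X Y A) (θseq t) j)) ^ 2) ≤
        Real.sqrt (∑ j, (w j - (θseq t j - η * piGrad (glmObj X Y A) (θseq t) j)) ^ 2))
    (T : ℕ) (hT : 1 ≤ T) (θ : Fin d → ℝ) (hθ : θ ∈ C) :
    glmObj X μ A (θseq T) ≤ glmObj X μ A θ
      + η * T / 2 * ∑ j, (X.transpose.mulVec (fun i => Y i - μ i) j / n) ^ 2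
      + (1 / (η * T)) / 2 * ∑ j, θ j ^ 2 := by
  have hηL : η * L ≤ 1 := (le_div_iff₀ (one_div_pos.1 (hη.1.trans_le hη.2))).1 hη.2
  obtain ⟨hK, h0K⟩ : Convex ℝ (ofLp ⁻¹' C : Set (EuclideanSpace ℝ (Fin d))) ∧
      (0 : EuclideanSpace ℝ (Fin d)) ∈ ofLp ⁻¹' C := by
    rcases hC with rfl | ⟨hb, rfl⟩
    · exact ⟨convex_univ, trivial⟩
    · rw [EuclideanSpace.preimage_ofLp_setOf_sqrt_sum_sq_le]
      exact ⟨convex_closedBall 0 b, Metric.mem_closedBall_self hb.le⟩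
  have hpgd : IsProjGradDescent (ofLp ⁻¹' C) (fun u => toLp 2 (piGrad (glmObj X Y A) (ofLp u))) η
      fun t => toLp 2 (θseq t) := fun t =>
    ⟨(hupd t).1, fun w hw => by simpa [EuclideanSpace.norm_eq] using (hupd t).2 _ hw⟩
  have hconv : ConvexOn ℝ (ofLp ⁻¹' C) (glmObj X Y A ∘ ofLp) :=
    ((glmObj_convexOn X Y hA).comp_linearMap (WithLp.linearEquiv 2 ℝ _).toLinearMap).subset
      (Set.subset_univ _) hK
  have hloss := hpgd.le_add_norm_sq_div hK hconv
    (fun u hu => hasGradientAt_comp_ofLp (hdiff _ hu))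
    (fun u hu v hv => by simpa [EuclideanSpace.norm_eq] using hsmooth _ hu _ hv) hη.1 hηL
    (by simpa [hθ0] using h0K) (w := toLp 2 θ) hθ hT
  simp only [hθ0, EuclideanSpace.real_norm_sq_eq, Function.comp_apply, ← toLp_sub,
    zero_sub, Pi.neg_apply, neg_sq, mul_assoc] at hloss
  exact glmObj_risk_le_of_loss_le X Y μ A (mul_pos hη.1 (Nat.cast_pos.2 hT)) hloss

/-- **Risk bound for (projected) gradient descent on a GLM.**
Fix `X`, `Y`, `μ`, a convex cumulant `A`, and assume the GLM loss `ℓ` is `L`-smooth on the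
constraint set `C`, which is either all of `ℝ^d` or the closed Euclidean ball of radius
`b > 0`. Let `θseq` be the (projected) gradient descent iterates for `ℓ` on `C`
(each `θseq (t+1)` is the Euclidean projection onto `C` of the gradient step
`θseq t - η ∇ℓ(θseq t)`; when `C = ℝ^d` this is plain gradient descent), initialized at
`0` with constant step size `η ∈ (0, 1/L]`.  Then for every `T ≥ 1`, with `λ_T := 1/(ηT)`,
and every `θ ∈ C`:
`Risk(θseq T) ≤ Risk(θ) + (1/(2λ_T)) ‖Xᵀε/n‖₂² + (λ_T/2) ‖θ‖₂²`. -/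
theorem gd_glm_risk_bound {n d : ℕ} (hn : 0 < n)
    (X : Matrix (Fin n) (Fin d) ℝ) (Y μ : Fin n → ℝ)
    (A : ℝ → ℝ) (hA : ConvexOn ℝ Set.univ A)
    (C : Set (Fin d → ℝ)) (b : ℝ)
    (hC : C = Set.univ ∨ (0 < b ∧ C = {θ | Real.sqrt (∑ j, θ j ^ 2) ≤ b}))
    (hdiff : ∀ θ ∈ C, DifferentiableAt ℝ (glmObj X Y A) θ)
    (L : ℝ) (hL : 0 < L)
    (hsmooth : ∀ x ∈ C, ∀ y ∈ C,
      Real.sqrt (∑ j, (piGrad (glmObj X Y A) x j - piGrad (glmObj X Y A) y j) ^ 2) ≤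
        L * Real.sqrt (∑ j, (x j - y j) ^ 2))
    (η : ℝ) (hη : 0 < η ∧ η ≤ 1 / L)
    (θseq : ℕ → Fin d → ℝ) (hθ0 : θseq 0 = 0)
    (hupd : ∀ t, θseq (t + 1) ∈ C ∧ ∀ w ∈ C,
      Real.sqrt (∑ j, (θseq (t + 1) j -
          (θseq t j - η * piGrad (glmObj X Y A) (θseq t) j)) ^ 2) ≤
        Real.sqrt (∑ j, (w j - (θseq t j - η * piGrad (glmObj X Y A) (θseq t) j)) ^ 2))
    (T : ℕ) (hT : 1 ≤ T) (θ : Fin d → ℝ) (hθ : θ ∈ C) :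
    glmObj X μ A (θseq T) ≤ glmObj X μ A θ
      + η * T / 2 * ∑ j, (X.transpose.mulVec (fun i => Y i - μ i) j / n) ^ 2
      + (1 / (η * T)) / 2 * ∑ j, θ j ^ 2 :=
  gd_glm_risk_bound_general X Y μ A hA C b hC hdiff L hsmooth η hη θseq hθ0 hupd T hT θ hθ
end

section
/- Fix X ∈ ℝ^{n×d}, vectors Y, μ ∈ ℝ^n, and set ε := Y − μ. Let A : ℝ → ℝ be any function, A(v) := Σ_{i=1}^n A(v_i), ℓ(θ) := (1/n)(−YᵀXθ + A(Xθ)), Risk(θ) := (1/n)(−μᵀXθ + A(Xθ)). Let λ > 0, z ∈ Δ_d, and let θ̂_λ be a minimizer over the probability simplex Δ_d of θ ↦ ℓ(θ) + λ D_KL(θ, z). Then for every θ ∈ Δ_d with D_KL(θ, z) < ∞: Risk(θ̂_λ) − Risk(θ) ≤ (1/λ)‖Xᵀε/n‖_∞² + 2λ D_KL(θ, z). -/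
open Finset

/-- The probability simplex `Δ_d = {a : a_i ≥ 0, Σ a_i = 1}`. -/
def probSimplex (d : ℕ) : Set (Fin d → ℝ) :=
  {a | (∀ i, 0 ≤ a i) ∧ ∑ i, a i = 1}

/-- Kullback–Leibler divergence `Σ_i a_i log(a_i / b_i)` (finite-valued formula, with the
convention `0 · log 0 = 0`; it agrees with the usual KL divergence whenever `a` is
absolutely continuous with respect to `b`, i.e. `b_i = 0 → a_i = 0`). -/
noncomputable def klDiv' {d : ℕ} (a b : Fin d → ℝ) : ℝ :=
  ∑ i, a i * Real.log (a i / b i)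

/-
The basic inequality for the minimiser, `ℓ(θ̂) + λ KL(θ̂, z) ≤ ℓ(θ) + λ KL(θ, z)`, together with
`Risk = ℓ + ⟨c, ·⟩` for `c = Xᵀε/n`, bounds the excess risk by
`λ KL(θ, z) − λ KL(θ̂, z) + ⟨c, θ̂ − θ⟩`.
Hölder and the triangle inequality through `z` give `⟨c, θ̂ − θ⟩ ≤ ‖c‖_∞ (‖θ̂ − z‖₁ + ‖θ − z‖₁)`,
Pinsker turns `λ KL` into `λ ‖·‖₁² / 2`, and `‖c‖_∞ t ≤ ‖c‖_∞² / (2λ) + λ t² / 2` absorbs both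
ℓ₁ terms. Pinsker itself follows from the pointwise bound
`a log (a/b) − a + b ≥ 3 (a − b)² / (2a + 4b)` and Cauchy–Schwarz against the weights
`(2a + 4b)/3`, which sum to `2`. With `a = b x` the pointwise bound is `pinskerGap x ≥ 0`, true
because `pinskerGap` and its derivative vanish at `1` and the derivative is increasing.
-/

open Set Real

theorem apply_le_apply_of_hasDerivAt_of_sign_change {f f' : ℝ → ℝ} {c x : ℝ}
    (hf : ∀ y ∈ uIcc c x, HasDerivAt f (f' y) y)
    (hf' : ∀ y ∈ uIcc c x, 0 ≤ (y - c) * f' y) : f c ≤ f x := by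
  have hcont : ContinuousOn f (uIcc c x) := fun y hy => (hf y hy).continuousAt.continuousWithinAt
  rcases le_total c x with hcx | hxc
  · rw [uIcc_of_le hcx] at hf hf' hcont
    refine monotoneOn_of_hasDerivWithinAt_nonneg (convex_Icc c x) hcont
      (fun y hy => (hf y (interior_subset hy)).hasDerivWithinAt) (fun y hy => ?_)
      (left_mem_Icc.2 hcx) (right_mem_Icc.2 hcx) hcx
    rw [interior_Icc] at hy
    exact nonneg_of_mul_nonneg_right (hf' y (Ioo_subset_Icc_self hy)) (sub_pos.2 hy.1)
  · rw [uIcc_of_ge hxc] at hf hf' hcont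
    refine antitoneOn_of_hasDerivWithinAt_nonpos (convex_Icc x c) hcont
      (fun y hy => (hf y (interior_subset hy)).hasDerivWithinAt) (fun y hy => ?_)
      (left_mem_Icc.2 hxc) (right_mem_Icc.2 hxc) hxc
    rw [interior_Icc] at hy
    exact nonpos_of_mul_nonneg_right (hf' y (Ioo_subset_Icc_self hy)) (sub_neg.2 hy.2)

noncomputable def pinskerGap (x : ℝ) : ℝ :=
  x * log x - x + 1 - 3 * (x - 1) ^ 2 / (2 * x + 4)

noncomputable def pinskerGapDeriv (x : ℝ) : ℝ :=
  log x - 3 * (x ^ 2 + 4 * x - 5) / (2 * (x + 2) ^ 2)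

theorem hasDerivAt_pinskerGapDeriv {x : ℝ} (hx : 0 < x) :
    HasDerivAt pinskerGapDeriv ((x - 1) ^ 2 * (x + 8) / (x * (x + 2) ^ 3)) x := by
  have hnum : HasDerivAt (fun y : ℝ => 3 * (y ^ 2 + 4 * y - 5)) (3 * (2 * x + 4)) x := by
    simpa using (((hasDerivAt_pow 2 x).add ((hasDerivAt_id x).const_mul 4)).sub_const 5).const_mul 3
  have hden : HasDerivAt (fun y : ℝ => 2 * (y + 2) ^ 2) (2 * (2 * (x + 2))) x := by
    simpa using (((hasDerivAt_id x).add_const 2).pow 2).const_mul 2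
  refine ((hasDerivAt_log hx.ne').sub (hnum.div hden (by positivity)) :
    HasDerivAt pinskerGapDeriv _ x).congr_deriv ?_
  field_simp
  ring

theorem monotoneOn_pinskerGapDeriv : MonotoneOn pinskerGapDeriv (Set.Ioi 0) := by
  refine monotoneOn_of_hasDerivWithinAt_nonneg (convex_Ioi 0)
    (fun x hx => (hasDerivAt_pinskerGapDeriv hx).continuousAt.continuousWithinAt)
    (fun x hx => (hasDerivAt_pinskerGapDeriv (interior_subset hx)).hasDerivWithinAt)
    (fun x hx => ?_)
  have hx : 0 < x := interior_subset hx
  positivity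

theorem hasDerivAt_pinskerGap {x : ℝ} (hx : 0 < x) :
    HasDerivAt pinskerGap (pinskerGapDeriv x) x := by
  have hxlog : HasDerivAt (fun y => y * log y) (1 * log x + x * x⁻¹) x :=
    (hasDerivAt_id x).mul (hasDerivAt_log hx.ne')
  have hnum : HasDerivAt (fun y : ℝ => 3 * (y - 1) ^ 2) (3 * (2 * (x - 1))) x := by
    simpa using (((hasDerivAt_id x).sub_const 1).pow 2).const_mul 3
  have hden : HasDerivAt (fun y : ℝ => 2 * y + 4) 2 x := by
    simpa using ((hasDerivAt_id x).const_mul 2).add_const 4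
  refine (((hxlog.sub (hasDerivAt_id x)).add_const 1).sub (hnum.div hden (by positivity)) :
    HasDerivAt pinskerGap _ x).congr_deriv ?_
  rw [pinskerGapDeriv]
  field_simp
  ring

theorem pinskerGap_nonneg {x : ℝ} (hx : 0 ≤ x) : 0 ≤ pinskerGap x := by
  rcases hx.eq_or_lt with rfl | hx
  · norm_num [pinskerGap]
  have hpos : ∀ y ∈ uIcc 1 x, 0 < y := fun y hy => lt_of_lt_of_le (lt_min one_pos hx) hy.1
  have h := apply_le_apply_of_hasDerivAt_of_sign_change (f := pinskerGap) (c := 1) (x := x)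
    (fun y hy => hasDerivAt_pinskerGap (hpos y hy)) fun y hy => ?_
  · simpa [pinskerGap] using h
  have hD : pinskerGapDeriv 1 = 0 := by norm_num [pinskerGapDeriv]
  have hy : y ∈ Set.Ioi 0 := hpos y hy
  rcases le_total 1 y with h1 | h1
  · exact mul_nonneg (sub_nonneg.2 h1)
      (hD ▸ monotoneOn_pinskerGapDeriv (mem_Ioi.2 one_pos) hy h1)
  · exact mul_nonneg_of_nonpos_of_nonpos (sub_nonpos.2 h1)
      (hD ▸ monotoneOn_pinskerGapDeriv hy (mem_Ioi.2 one_pos) h1)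

theorem three_mul_sq_div_add_sub_le_mul_log_div {a b : ℝ} (ha : 0 ≤ a) (hb : 0 ≤ b)
    (hab : b = 0 → a = 0) : 3 * (a - b) ^ 2 / (2 * a + 4 * b) + (a - b) ≤ a * log (a / b) := by
  rcases hb.eq_or_lt with rfl | hb
  · simp [hab rfl]
  have hgap : b * pinskerGap (a / b)
      = a * log (a / b) - (a - b) - 3 * (a - b) ^ 2 / (2 * a + 4 * b) := by
    have : 2 * a + 4 * b ≠ 0 := by positivity
    rw [pinskerGap]
    field_simp
    ring
  linarith [mul_nonneg hb.le (pinskerGap_nonneg (div_nonneg ha hb.le))]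

theorem sq_sum_abs_sub_le_two_mul_klDiv' {d : ℕ} {a b : Fin d → ℝ}
    (ha : a ∈ probSimplex d) (hb : b ∈ probSimplex d) (hab : ∀ i, b i = 0 → a i = 0) :
    (∑ i, |a i - b i|) ^ 2 ≤ 2 * klDiv' a b := by
  have hw : ∀ i, 0 ≤ 2 * a i + 4 * b i := fun i => by linarith [ha.1 i, hb.1 i]
  have hcs := sum_sq_le_sum_mul_sum_of_sq_le_mul Finset.univ (r := fun i => |a i - b i|)
    (f := fun i => 3 * (a i - b i) ^ 2 / (2 * a i + 4 * b i))
    (g := fun i => (2 * a i + 4 * b i) / 3)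
    (fun i _ => div_nonneg (by positivity) (hw i)) (fun i _ => by linarith [hw i]) fun i _ => by
      rcases (hw i).eq_or_lt with h0 | h0
      · obtain ⟨ha0, hb0⟩ : a i = 0 ∧ b i = 0 := by
          constructor <;> linarith [ha.1 i, hb.1 i]
        simp [ha0, hb0]
      · generalize 2 * a i + 4 * b i = w at h0 ⊢
        rw [sq_abs]
        exact le_of_eq (by field_simp)
  have hweight : ∑ i, (2 * a i + 4 * b i) / 3 = 2 := by
    rw [← sum_div, sum_add_distrib, ← mul_sum, ← mul_sum, ha.2, hb.2]
    norm_num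
  have hkl : ∑ i, 3 * (a i - b i) ^ 2 / (2 * a i + 4 * b i) ≤ klDiv' a b := by
    have := sum_le_sum fun i (_ : i ∈ Finset.univ) =>
      three_mul_sq_div_add_sub_le_mul_log_div (ha.1 i) (hb.1 i) (hab i)
    rwa [sum_add_distrib, sum_sub_distrib, ha.2, hb.2, sub_self, add_zero] at this
  rw [hweight] at hcs
  linarith

theorem sum_mul_le_iSup_abs_mul_sum_abs {ι : Type*} [Fintype ι] (c x : ι → ℝ) :
    ∑ j, c j * x j ≤ (⨆ j, |c j|) * ∑ j, |x j| := by
  rw [mul_sum]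
  refine sum_le_sum fun j _ => ?_
  calc c j * x j ≤ |c j| * |x j| := abs_mul (c j) (x j) ▸ le_abs_self _
    _ ≤ (⨆ j, |c j|) * |x j| := by
      gcongr
      exact le_ciSup (Set.finite_range fun j => |c j|).bddAbove j

theorem glmObj_eq_add_sum_mul {n d : ℕ} (X : Matrix (Fin n) (Fin d) ℝ) (Y μ : Fin n → ℝ)
    (A : ℝ → ℝ) (v : Fin d → ℝ) :
    glmObj X μ A v
      = glmObj X Y A v + ∑ j, X.transpose.mulVec (fun i => Y i - μ i) j / n * v j := by
  have hnoise : ∑ j, X.transpose.mulVec (fun i => Y i - μ i) j / n * v j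
      = 1 / n * ∑ i, (Y i - μ i) * X.mulVec v i := by
    calc _ = 1 / n * (X.transpose.mulVec (fun i => Y i - μ i) ⬝ᵥ v) := by
          rw [dotProduct, mul_sum]
          exact sum_congr rfl fun j _ => by ring
      _ = _ := by rw [Matrix.mulVec_transpose, ← Matrix.dotProduct_mulVec, dotProduct]
  rw [hnoise, glmObj, glmObj]
  simp only [sub_mul, sum_sub_distrib]
  ring

theorem kl_glm_risk_bound_general {n d : ℕ}
    (X : Matrix (Fin n) (Fin d) ℝ) (Y μ : Fin n → ℝ) (A : ℝ → ℝ)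
    (lam : ℝ) (hlam : 0 < lam)
    (z : Fin d → ℝ) (hz : z ∈ probSimplex d)
    (θhat : Fin d → ℝ) (hθhat_mem : θhat ∈ probSimplex d)
    (hθhat_ac : ∀ i, z i = 0 → θhat i = 0)
    (hmin : ∀ θ ∈ probSimplex d, (∀ i, z i = 0 → θ i = 0) →
      glmObj X Y A θhat + lam * klDiv' θhat z ≤ glmObj X Y A θ + lam * klDiv' θ z)
    (θ : Fin d → ℝ) (hθ : θ ∈ probSimplex d) (hac : ∀ i, z i = 0 → θ i = 0) :
    glmObj X μ A θhat - glmObj X μ A θ ≤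
      1 / lam * (⨆ j, |X.transpose.mulVec (fun i => Y i - μ i) j / n|) ^ 2
        + 2 * lam * klDiv' θ z := by
  set c := fun j => X.transpose.mulVec (fun i => Y i - μ i) j / n
  set s := ⨆ j, |c j|
  have hs : 0 ≤ s := Real.iSup_nonneg fun _ => abs_nonneg _
  have hrisk : glmObj X μ A θhat - glmObj X μ A θ
      = glmObj X Y A θhat - glmObj X Y A θ + ∑ j, c j * (θhat j - θ j) := by
    simp only [glmObj_eq_add_sum_mul X Y μ, mul_sub, sum_sub_distrib, c]
    ring
  have hnoise : ∑ j, c j * (θhat j - θ j) ≤ s * (∑ j, |θhat j - z j| + ∑ j, |θ j - z j|) := by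
    refine (sum_mul_le_iSup_abs_mul_sum_abs _ _).trans (mul_le_mul_of_nonneg_left ?_ hs)
    rw [← sum_add_distrib]
    exact sum_le_sum fun j _ => by
      simpa only [Real.dist_eq] using dist_triangle_right (θhat j) (θ j) (z j)
  have hyoung : ∀ w, s * w ≤ s ^ 2 / (2 * lam) + lam / 2 * w ^ 2 := fun w => by
    rw [div_add' _ _ _ (by positivity), le_div_iff₀ (by positivity)]
    nlinarith [sq_nonneg (s - lam * w)]
  have hpinsker_hat := mul_le_mul_of_nonneg_left
    (sq_sum_abs_sub_le_two_mul_klDiv' hθhat_mem hz hθhat_ac) hlam.le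
  have hpinsker := mul_le_mul_of_nonneg_left (sq_sum_abs_sub_le_two_mul_klDiv' hθ hz hac) hlam.le
  have hhalf : s ^ 2 / (2 * lam) + s ^ 2 / (2 * lam) = 1 / lam * s ^ 2 := by field_simp; ring
  linarith [hmin θ hθ hac, hyoung (∑ j, |θhat j - z j|), hyoung (∑ j, |θ j - z j|)]

/-- **Risk bound for the KL-regularized GLM estimator.**
Fix `X`, `Y`, `μ`, a cumulant `A`, `lam > 0` and an anchor `z ∈ Δ_d`. If `θhat` minimizes
`ℓ(θ) + lam·D_KL(θ, z)` over the probability simplex, then for every `θ ∈ Δ_d` with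
`D_KL(θ, z) < ∞` (i.e. `θ` absolutely continuous w.r.t. `z`):
`Risk(θhat) - Risk(θ) ≤ (1/lam) ‖Xᵀε/n‖_∞² + 2·lam·D_KL(θ, z)`. -/
theorem kl_glm_risk_bound {n d : ℕ} (hn : 0 < n)
    (X : Matrix (Fin n) (Fin d) ℝ) (Y μ : Fin n → ℝ) (A : ℝ → ℝ)
    (lam : ℝ) (hlam : 0 < lam)
    (z : Fin d → ℝ) (hz : z ∈ probSimplex d)
    (θhat : Fin d → ℝ) (hθhat_mem : θhat ∈ probSimplex d)
    (hθhat_ac : ∀ i, z i = 0 → θhat i = 0)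
    (hmin : ∀ θ ∈ probSimplex d, (∀ i, z i = 0 → θ i = 0) →
      glmObj X Y A θhat + lam * klDiv' θhat z ≤ glmObj X Y A θ + lam * klDiv' θ z)
    (θ : Fin d → ℝ) (hθ : θ ∈ probSimplex d) (hac : ∀ i, z i = 0 → θ i = 0) :
    glmObj X μ A θhat - glmObj X μ A θ ≤
      1 / lam * (⨆ j, |X.transpose.mulVec (fun i => Y i - μ i) j / n|) ^ 2
        + 2 * lam * klDiv' θ z :=
  kl_glm_risk_bound_general X Y μ A lam hlam z hz θhat hθhat_mem hθhat_ac hmin θ hθ hac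
end

section
/- Let B be a finite nonempty set, R̂_n : B → ℝ a function (the empirical risk), and z a probability vector on B with z(β) > 0 for all β ∈ B. Let (θ_t) be exponentiated gradient descent iterates with constant step size η > 0 applied to the linear function f(θ) := Σ_{β ∈ B} θ(β) R̂_n(β) on the probability simplex over B, initialized at θ_0 = z. Then for every integer T ≥ 1, with λ_T := 1/(ηT), the iterate θ_T equals the Gibbs distribution θ̂_{λ_T}(β) = z(β)·exp(−R̂_n(β)/λ_T) / Σ_{β' ∈ B} z(β')·exp(−R̂_n(β')/λ_T), which is the unique minimizer over probability vectors θ on B of θ ↦ Σ_β θ(β) R̂_n(β) + λ_T D_KL(θ, z). -/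
open Finset

/-- Kullback–Leibler divergence `Σ_β p(β) log(p(β)/q(β))` between probability vectors on a
finite type (with the convention `0 · log 0 = 0`). -/
noncomputable def klFin {B : Type*} [Fintype B] (p q : B → ℝ) : ℝ :=
  ∑ β, p β * Real.log (p β / q β)

/-- Strict log inequality: `log u < u - 1` for positive `u ≠ 1`. -/
lemma log_lt_sub_one_aux {u : ℝ} (hu : 0 < u) (hu1 : u ≠ 1) : Real.log u < u - 1 := by
  have hlog : Real.log u ≠ 0 := by
    intro h
    exact hu1 (by rw [← Real.exp_log hu, h, Real.exp_zero])
  have := Real.add_one_lt_exp hlog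
  rw [Real.exp_log hu] at this
  linarith

/-- Termwise lower bound for KL: `x - y ≤ x * log (x / y)`. -/
lemma kl_term_le {x y : ℝ} (hy : 0 < y) (hx : 0 ≤ x) :
    x - y ≤ x * Real.log (x / y) := by
  rcases hx.eq_or_lt with h | h
  · simp [← h]; linarith
  · have h1 : Real.log (y / x) ≤ y / x - 1 := Real.log_le_sub_one_of_pos (by positivity)
    have h2 : Real.log (y / x) = - Real.log (x / y) := by
      rw [← Real.log_inv, inv_div]
    have h3 := mul_le_mul_of_nonneg_left h1 h.le
    rw [h2] at h3
    have h4 : x * (y / x - 1) = y - x := by field_simp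
    nlinarith
  
/-- Strict termwise bound for KL when `x ≠ y`. -/
lemma kl_term_lt {x y : ℝ} (hy : 0 < y) (hx : 0 ≤ x) (hxy : x ≠ y) :
    x - y < x * Real.log (x / y) := by
  rcases hx.eq_or_lt with h | h
  · simp [← h]; linarith
  · have hne : y / x ≠ 1 := by
      intro hh
      exact hxy (by field_simp at hh; linarith)
    have h1 : Real.log (y / x) < y / x - 1 := log_lt_sub_one_aux (by positivity) hne
    have h2 : Real.log (y / x) = - Real.log (x / y) := by
      rw [← Real.log_inv, inv_div]
    have h3 := mul_lt_mul_of_pos_left h1 h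
    rw [h2] at h3
    have h4 : x * (y / x - 1) = y - x := by field_simp
    nlinarith

/-- **Equivalence of exponentiated gradient descent and the Gibbs posterior.**
Let `B` be a finite nonempty set, `Rhat : B → ℝ` an empirical risk, and `z` a probability
vector on `B` with strictly positive entries. Run exponentiated gradient descent with
constant step size `η > 0` on the linear function `θ ↦ Σ_β θ(β)·Rhat(β)` over the simplex,
initialized at `z` (the gradient being the constant vector `Rhat`). Then for every `T ≥ 1`,
with `λ_T := 1/(ηT)`, the iterate `θ T` equals the Gibbs distribution
`β ↦ z(β)·e^{−Rhat(β)/λ_T} / Σ_{β'} z(β')·e^{−Rhat(β')/λ_T}`, and this Gibbs distribution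
is the unique minimizer over probability vectors of `θ ↦ Σ_β θ(β)·Rhat(β) + λ_T·D_KL(θ, z)`. -/
theorem egd_equals_gibbs {B : Type*} [Fintype B] [Nonempty B]
    (Rhat : B → ℝ) (z : B → ℝ) (hz_pos : ∀ β, 0 < z β) (hz_sum : ∑ β, z β = 1)
    (η : ℝ) (hη : 0 < η)
    (θ : ℕ → B → ℝ) (hθ0 : θ 0 = z)
    (hupd : ∀ t β, θ (t + 1) β =
      θ t β * Real.exp (-η * Rhat β) / ∑ β', θ t β' * Real.exp (-η * Rhat β'))
    (T : ℕ) (hT : 1 ≤ T) :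
    (∀ β, θ T β =
        z β * Real.exp (-(Rhat β) * (η * T)) /
          ∑ β', z β' * Real.exp (-(Rhat β') * (η * T))) ∧
      (∀ p : B → ℝ, (∀ β, 0 ≤ p β) → ∑ β, p β = 1 →
        (∑ β, θ T β * Rhat β) + (1 / (η * T)) * klFin (θ T) z ≤
          (∑ β, p β * Rhat β) + (1 / (η * T)) * klFin p z) ∧
      (∀ p : B → ℝ, (∀ β, 0 ≤ p β) → ∑ β, p β = 1 →
        (∑ β, p β * Rhat β) + (1 / (η * T)) * klFin p z =
          (∑ β, θ T β * Rhat β) + (1 / (η * T)) * klFin (θ T) z →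
        p = θ T) := by
  have hT0 : (0:ℝ) < (T:ℝ) := by exact_mod_cast Nat.lt_of_lt_of_le Nat.zero_lt_one hT
  have hc : 0 < η * (T:ℝ) := mul_pos hη hT0
  -- Step 1: closed form for the iterates.
  have key : ∀ t : ℕ, ∀ β, θ t β =
      z β * Real.exp (-(Rhat β) * (η * t)) /
        ∑ β', z β' * Real.exp (-(Rhat β') * (η * t)) := by
    intro t
    induction t with
    | zero => intro β; simp [hθ0, hz_sum]
    | succ t ih =>
      intro β
      have hSpos : 0 < ∑ β', z β' * Real.exp (-(Rhat β') * (η * t)) :=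
        Finset.sum_pos (fun β' _ => mul_pos (hz_pos β') (Real.exp_pos _))
          Finset.univ_nonempty
      have hexp : ∀ γ, Real.exp (-(Rhat γ) * (η * t)) * Real.exp (-η * Rhat γ)
          = Real.exp (-(Rhat γ) * (η * (t + 1 : ℕ))) := by
        intro γ
        rw [← Real.exp_add]
        congr 1
        push_cast
        ring
      have hstep : ∀ γ, θ t γ * Real.exp (-η * Rhat γ) =
          z γ * Real.exp (-(Rhat γ) * (η * (t + 1 : ℕ))) /
            ∑ β', z β' * Real.exp (-(Rhat β') * (η * t)) := by
        intro γ
        rw [ih γ, div_mul_eq_mul_div, mul_assoc, hexp γ]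
      rw [hupd t β, hstep β]
      have hsum : ∑ β', θ t β' * Real.exp (-η * Rhat β') =
          (∑ β', z β' * Real.exp (-(Rhat β') * (η * (t + 1 : ℕ)))) /
            ∑ β', z β' * Real.exp (-(Rhat β') * (η * t)) := by
        rw [Finset.sum_div]
        exact Finset.sum_congr rfl fun γ _ => hstep γ
      rw [hsum, div_div_div_cancel_right₀ hSpos.ne']
  -- Notation for Gibbs distribution.
  set Z : ℝ := ∑ β', z β' * Real.exp (-(Rhat β') * (η * T)) with hZdef
  have hZpos : 0 < Z :=
    Finset.sum_pos (fun β' _ => mul_pos (hz_pos β') (Real.exp_pos _)) Finset.univ_nonempty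
  set g : B → ℝ := fun β => z β * Real.exp (-(Rhat β) * (η * T)) / Z with hgdef
  have hθT : ∀ β, θ T β = g β := key T
  have hg_pos : ∀ β, 0 < g β := fun β =>
    div_pos (mul_pos (hz_pos β) (Real.exp_pos _)) hZpos
  have hg_sum : ∑ β, g β = 1 := by
    rw [hgdef, ← Finset.sum_div]
    exact div_self hZpos.ne'
  have hlogg : ∀ β, Real.log (g β) =
      Real.log (z β) + (-(Rhat β) * (η * T)) - Real.log Z := by
    intro β
    rw [hgdef]
    rw [Real.log_div (mul_pos (hz_pos β) (Real.exp_pos _)).ne' hZpos.ne',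
      Real.log_mul (hz_pos β).ne' (Real.exp_ne_zero _), Real.log_exp]
  -- Representation of the objective in terms of KL to the Gibbs distribution.
  have rep : ∀ p : B → ℝ, (∀ β, 0 ≤ p β) → ∑ β, p β = 1 →
      (∑ β, p β * Rhat β) + (1 / (η * T)) * klFin p z
        = (1 / (η * T)) * (∑ β, p β * Real.log (p β / g β))
            - (1 / (η * T)) * Real.log Z := by
    intro p hp hps
    have hconst : (1 / (η * T)) * Real.log Z
        = ∑ β, p β * ((1 / (η * T)) * Real.log Z) := by
      rw [← Finset.sum_mul, hps, one_mul]
    unfold klFin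
    rw [Finset.mul_sum, Finset.mul_sum, hconst, ← Finset.sum_add_distrib,
      ← Finset.sum_sub_distrib]
    refine Finset.sum_congr rfl fun β _ => ?_
    rcases (hp β).eq_or_lt with h | h
    · simp [← h]
    · rw [Real.log_div h.ne' (hz_pos β).ne', Real.log_div h.ne' (hg_pos β).ne',
        hlogg β]
      field_simp
      ring
  -- KL nonnegativity and strictness relative to g.
  have kl_nonneg : ∀ p : B → ℝ, (∀ β, 0 ≤ p β) → ∑ β, p β = 1 →
      0 ≤ ∑ β, p β * Real.log (p β / g β) := by
    intro p hp hps
    have h1 : ∑ β, (p β - g β) ≤ ∑ β, p β * Real.log (p β / g β) :=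
      Finset.sum_le_sum fun β _ => kl_term_le (hg_pos β) (hp β)
    rwa [Finset.sum_sub_distrib, hps, hg_sum, sub_self] at h1
  have kl_eq_zero : ∀ p : B → ℝ, (∀ β, 0 ≤ p β) → ∑ β, p β = 1 →
      (∑ β, p β * Real.log (p β / g β)) = 0 → p = g := by
    intro p hp hps h0
    by_contra hne
    obtain ⟨β₀, hβ₀⟩ : ∃ β, p β ≠ g β := by
      by_contra hall
      push_neg at hall
      exact hne (funext hall)
    have h1 : ∑ β, (p β - g β) < ∑ β, p β * Real.log (p β / g β) :=
      Finset.sum_lt_sum (fun β _ => kl_term_le (hg_pos β) (hp β))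
        ⟨β₀, Finset.mem_univ _, kl_term_lt (hg_pos β₀) (hp β₀) hβ₀⟩
    rw [Finset.sum_sub_distrib, hps, hg_sum, sub_self, h0] at h1
    exact lt_irrefl _ h1
  have hθTf : θ T = g := funext hθT
  have hklgg : ∑ β, g β * Real.log (g β / g β) = 0 := by
    apply Finset.sum_eq_zero
    intro β _
    rw [div_self (hg_pos β).ne', Real.log_one, mul_zero]
  have hFg : (∑ β, θ T β * Rhat β) + (1 / (η * T)) * klFin (θ T) z
      = - (1 / (η * T)) * Real.log Z := by
    rw [hθTf]
    rw [rep g (fun β => (hg_pos β).le) hg_sum, hklgg]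
    ring
  refine ⟨hθT, ?_, ?_⟩
  · intro p hp hps
    rw [hFg, rep p hp hps]
    have := kl_nonneg p hp hps
    have hlam : 0 < 1 / (η * T) := by positivity
    nlinarith
  · intro p hp hps heq
    rw [hFg, rep p hp hps] at heq
    have hlam : 0 < 1 / (η * T) := by positivity
    have h0 : (∑ β, p β * Real.log (p β / g β)) = 0 := by
      have : (1 / (η * T)) * (∑ β, p β * Real.log (p β / g β)) = 0 := by linarith
      exact (mul_eq_zero.mp this).resolve_left hlam.ne'
    rw [hθTf]
    exact kl_eq_zero p hp hps h0
end

section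
/- Let B be a finite nonempty set, R̂_n : B → ℝ and R : B → ℝ functions, z a probability vector on B, λ > 0, and let θ̂_λ be a minimizer over probability vectors θ on B of θ ↦ Σ_β θ(β) R̂_n(β) + λ D_KL(θ, z). Then for every probability vector θ on B with D_KL(θ, z) < ∞: Σ_β θ̂_λ(β) R(β) − Σ_β θ(β) R(β) ≤ (1/λ)·( max_{β ∈ B} |R̂_n(β) − R(β)| )² + 2λ D_KL(θ, z). -/
open Finset

open Real

lemma mul_log_add_sub_le_mul_log_div {p q c : ℝ} (hp : 0 ≤ p) (hq : 0 ≤ q) (hc : 0 < c)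
    (hpq : q = 0 → p = 0) : p * log c + p - c * q ≤ p * log (p / q) := by
  rcases hp.eq_or_lt with rfl | hp
  · simpa using mul_nonneg hc.le hq
  have hq : 0 < q := hq.lt_of_ne fun h => hp.ne' (hpq h.symm)
  calc p * log c + p - c * q = p * log c + p * (1 - (p / q / c)⁻¹) := by
          field_simp; ring
    _ ≤ p * log c + p * log (p / q / c) := by
          gcongr; exact one_sub_inv_le_log_of_pos (by positivity)
    _ = p * log (p / q) := by rw [log_div (by positivity) hc.ne']; ring

lemma log_sum_inequality {ι : Type*} (s : Finset ι) {p q : ι → ℝ} (hp : ∀ i ∈ s, 0 ≤ p i)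
    (hq : ∀ i ∈ s, 0 ≤ q i) (hpq : ∀ i ∈ s, q i = 0 → p i = 0) :
    (∑ i ∈ s, p i) * log ((∑ i ∈ s, p i) / ∑ i ∈ s, q i) ≤ ∑ i ∈ s, p i * log (p i / q i) := by
  rcases (sum_nonneg hp).eq_or_lt with hP | hP
  · have hp0 := (sum_eq_zero_iff_of_nonneg hp).1 hP.symm
    rw [← hP, zero_mul]
    exact (sum_eq_zero fun i hi => by rw [hp0 i hi, zero_mul]).ge
  have hQ : 0 < ∑ i ∈ s, q i := by
    refine (sum_nonneg hq).lt_of_ne fun hQ => hP.ne' ?_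
    have hq0 := (sum_eq_zero_iff_of_nonneg hq).1 hQ.symm
    exact sum_eq_zero fun i hi => hpq i hi (hq0 i hi)
  set c := (∑ i ∈ s, p i) / ∑ i ∈ s, q i
  calc (∑ i ∈ s, p i) * log c
      = ∑ i ∈ s, (p i * log c + p i - c * q i) := by
        rw [sum_sub_distrib, sum_add_distrib, ← sum_mul, ← mul_sum, div_mul_cancel₀ _ hQ.ne']
        ring
    _ ≤ ∑ i ∈ s, p i * log (p i / q i) := sum_le_sum fun i hi =>
        mul_log_add_sub_le_mul_log_div (hp i hi) (hq i hi) (div_pos hP hQ) (hpq i hi)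

noncomputable def binaryKL (a b : ℝ) : ℝ :=
  a * log (a / b) + (1 - a) * log ((1 - a) / (1 - b))

lemma binaryKL_le_klFin {B : Type*} [Fintype B] (s : Finset B) {p z : B → ℝ}
    (hp : ∀ β, 0 ≤ p β) (hps : ∑ β, p β = 1) (hz : ∀ β, 0 ≤ z β) (hzs : ∑ β, z β = 1)
    (hpz : ∀ β, z β = 0 → p β = 0) :
    binaryKL (∑ β ∈ s, p β) (∑ β ∈ s, z β) ≤ klFin p z := by
  classical
  have hcompl : ∀ f : B → ℝ, ∑ β ∈ sᶜ, f β = ∑ β, f β - ∑ β ∈ s, f β := fun f =>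
    eq_sub_of_add_eq' (sum_add_sum_compl s f)
  have hs := log_sum_inequality s (fun β _ => hp β) (fun β _ => hz β) (fun β _ => hpz β)
  have hsc := log_sum_inequality sᶜ (fun β _ => hp β) (fun β _ => hz β) (fun β _ => hpz β)
  rw [hcompl p, hcompl z, hps, hzs] at hsc
  rw [binaryKL, klFin, ← sum_add_sum_compl s]
  exact add_le_add hs hsc

lemma mul_log_div_eq_mul_sub {x y : ℝ} (hxy : y = 0 → x = 0) :
    x * log (x / y) = x * (log x - log y) := by
  rcases eq_or_ne x 0 with rfl | hx
  · simp
  · rw [log_div hx (mt hxy hx)]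

lemma two_mul_sq_sub_le_binaryKL {a b : ℝ} (hb : 0 < b) (hba : b ≤ a) (ha : a ≤ 1) :
    2 * (a - b) ^ 2 ≤ binaryKL a b := by
  set f : ℝ → ℝ := fun x =>
    a * (log a - log x) + (1 - a) * (log (1 - a) - log (1 - x)) - 2 * (a - x) ^ 2
  have hderiv : ∀ x ∈ Set.Ioo b a,
      HasDerivAt f ((x - a) * ((1 - 2 * x) ^ 2 / (x * (1 - x)))) x := by
    intro x hx
    have hx0 : 0 < x := hb.trans hx.1
    have hx1 : 0 < 1 - x := by linarith [hx.2]
    have h := (((hasDerivAt_log hx0.ne').const_sub (log a)).const_mul a).add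
      (((((hasDerivAt_id x).const_sub 1).log hx1.ne').const_sub (log (1 - a))).const_mul (1 - a))
      |>.sub ((((hasDerivAt_id x).const_sub a).pow 2).const_mul 2)
    refine h.congr_deriv ?_
    simp only [id]
    field_simp
    ring
  have hcont : ContinuousOn f (Set.Icc b a) := by
    have hpos : ∀ x ∈ Set.Icc b a, x ≠ 0 := fun x hx => (hb.trans_le hx.1).ne'
    rcases ha.lt_or_eq with ha | rfl
    · have hlt : ∀ x ∈ Set.Icc b a, 1 - x ≠ 0 := fun x hx => by linarith [hx.2]
      fun_prop (disch := assumption)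
    -- for `a = 1`, `log (1 - x)` jumps at `x = a`, but its coefficient `1 - a` vanishes
    · simp only [f, sub_self, zero_mul, add_zero]
      fun_prop (disch := assumption)
  have hanti : AntitoneOn f (Set.Icc b a) := by
    refine antitoneOn_of_deriv_nonpos (convex_Icc b a) hcont ?_ ?_ <;> rw [interior_Icc]
    · exact fun x hx => (hderiv x hx).differentiableAt.differentiableWithinAt
    · intro x hx
      have hx1 : 0 < 1 - x := by linarith [hx.2]
      rw [(hderiv x hx).deriv]
      exact mul_nonpos_of_nonpos_of_nonneg (by linarith [hx.2])
        (div_nonneg (sq_nonneg _) (mul_pos (hb.trans hx.1) hx1).le)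
  have hfab := hanti ⟨le_rfl, hba⟩ ⟨hba, le_rfl⟩ hba
  have hfa : f a = 0 := by simp [f]
  rw [binaryKL, mul_log_div_eq_mul_sub (absurd · hb.ne'),
    mul_log_div_eq_mul_sub (fun _ => by linarith)]
  simp only [f] at hfab hfa
  linarith

lemma sum_abs_sub_eq_two_mul_sum_filter {B : Type*} [Fintype B] {p z : B → ℝ}
    (h : ∑ β, p β = ∑ β, z β) :
    ∑ β, |p β - z β| = 2 * ∑ β with z β < p β, (p β - z β) := by
  have habs : ∀ β, |p β - z β| = 2 * (if z β < p β then p β - z β else 0) - (p β - z β) := by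
    intro β
    split_ifs with hlt
    · rw [abs_of_pos (sub_pos.2 hlt)]; ring
    · rw [abs_of_nonpos (by linarith)]; ring
  simp only [habs, sum_sub_distrib, ← mul_sum, ← sum_filter, h, sub_self, sub_zero]

lemma sq_sum_abs_sub_le_two_mul_klFin {B : Type*} [Fintype B] {p z : B → ℝ}
    (hp : ∀ β, 0 ≤ p β) (hps : ∑ β, p β = 1) (hz : ∀ β, 0 ≤ z β) (hzs : ∑ β, z β = 1)
    (hpz : ∀ β, z β = 0 → p β = 0) :
    (∑ β, |p β - z β|) ^ 2 ≤ 2 * klFin p z := by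
  rw [sum_abs_sub_eq_two_mul_sum_filter (hps.trans hzs.symm), sum_sub_distrib]
  set A : Finset B := {β | z β < p β}
  have hkl := binaryKL_le_klFin A hp hps hz hzs hpz
  rcases A.eq_empty_or_nonempty with hA | hA
  · simp only [hA, sum_empty, binaryKL, sub_zero, div_zero, log_zero, mul_zero, div_one, log_one,
      add_zero] at hkl ⊢
    linarith
  have hzA : 0 < ∑ β ∈ A, z β := sum_pos (fun β hβ => (hz β).lt_of_ne fun h => by
    linarith [(mem_filter.1 hβ).2, hpz β h.symm]) hA
  have hba : ∑ β ∈ A, z β ≤ ∑ β ∈ A, p β := sum_le_sum fun β hβ => (mem_filter.1 hβ).2.le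
  have ha : ∑ β ∈ A, p β ≤ 1 := hps ▸ sum_le_univ_sum_of_nonneg hp
  nlinarith [two_mul_sq_sub_le_binaryKL hzA hba ha]

lemma sum_mul_sub_sum_mul_le {B : Type*} [Fintype B] (p q : B → ℝ) {h : B → ℝ} {T : ℝ}
    (hT : ∀ β, |h β| ≤ T) :
    ∑ β, p β * h β - ∑ β, q β * h β ≤ (∑ β, |p β - q β|) * T := by
  rw [← sum_sub_distrib, sum_mul]
  refine sum_le_sum fun β _ => ?_
  calc p β * h β - q β * h β = (p β - q β) * h β := by ring
    _ ≤ |p β - q β| * |h β| := by rw [← abs_mul]; exact le_abs_self _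
    _ ≤ |p β - q β| * T := by gcongr; exact hT β

lemma sum_abs_sub_le_add {B : Type*} [Fintype B] (p q z : B → ℝ) :
    ∑ β, |p β - q β| ≤ ∑ β, |p β - z β| + ∑ β, |q β - z β| := by
  rw [← sum_add_distrib]
  exact sum_le_sum fun β _ => (abs_sub_le _ (z β) _).trans_eq (by rw [abs_sub_comm (z β)])

lemma mul_le_of_sq_le_two_mul {L T K lam : ℝ} (hL : L ^ 2 ≤ 2 * K) (hlam : 0 < lam) :
    L * T ≤ 1 / lam * T ^ 2 / 2 + lam * K := by
  have h : 0 ≤ (T - lam * L) ^ 2 / lam := by positivity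
  have e : (T - lam * L) ^ 2 / lam = 1 / lam * T ^ 2 - 2 * L * T + lam * L ^ 2 := by
    field_simp; ring
  nlinarith

theorem gibbs_expected_risk_bound_general {B : Type*} [Fintype B]
    (Rhat R : B → ℝ) (z : B → ℝ)
    (hz_nonneg : ∀ β, 0 ≤ z β) (hz_sum : ∑ β, z β = 1)
    (lam : ℝ) (hlam : 0 < lam)
    (θhat : B → ℝ) (hθhat_nonneg : ∀ β, 0 ≤ θhat β) (hθhat_sum : ∑ β, θhat β = 1)
    (hθhat_ac : ∀ β, z β = 0 → θhat β = 0)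
    (hmin : ∀ p : B → ℝ, (∀ β, 0 ≤ p β) → ∑ β, p β = 1 → (∀ β, z β = 0 → p β = 0) →
      (∑ β, θhat β * Rhat β) + lam * klFin θhat z ≤ (∑ β, p β * Rhat β) + lam * klFin p z)
    (θ : B → ℝ) (hθ_nonneg : ∀ β, 0 ≤ θ β) (hθ_sum : ∑ β, θ β = 1)
    (hθ_ac : ∀ β, z β = 0 → θ β = 0) :
    (∑ β, θhat β * R β) - (∑ β, θ β * R β) ≤
      1 / lam * (⨆ β, |Rhat β - R β|) ^ 2 + 2 * lam * klFin θ z := by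
  set T := ⨆ β, |Rhat β - R β|
  have hT : ∀ β, |R β - Rhat β| ≤ T := fun β => abs_sub_comm (R β) (Rhat β) ▸
    le_ciSup (f := fun β => |Rhat β - R β|) (Finite.bddAbove_range _) β
  have hopt := hmin θ hθ_nonneg hθ_sum hθ_ac
  have hcross := (sum_mul_sub_sum_mul_le θhat θ hT).trans
    (mul_le_mul_of_nonneg_right (sum_abs_sub_le_add θhat θ z) (iSup_nonneg fun β => abs_nonneg _))
  have hθhat_close := mul_le_of_sq_le_two_mul (T := T)
    (sq_sum_abs_sub_le_two_mul_klFin hθhat_nonneg hθhat_sum hz_nonneg hz_sum hθhat_ac) hlam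
  have hθ_close := mul_le_of_sq_le_two_mul (T := T)
    (sq_sum_abs_sub_le_two_mul_klFin hθ_nonneg hθ_sum hz_nonneg hz_sum hθ_ac) hlam
  simp only [mul_sub, sum_sub_distrib] at hcross
  linarith

/-- **Expected population risk bound for the KL-regularized (Gibbs) randomized predictor.**
Let `B` be a finite nonempty set, `Rhat, R : B → ℝ`, `z` a probability vector on `B`, and
`lam > 0`. If `θhat` minimizes `θ ↦ Σ_β θ(β)·Rhat(β) + lam·D_KL(θ, z)` over probability
vectors on `B`, then for every probability vector `θ` with `D_KL(θ, z) < ∞` (i.e. `θ`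
absolutely continuous w.r.t. `z`):
`Σ_β θhat(β)·R(β) − Σ_β θ(β)·R(β) ≤ (1/lam)·(max_β |Rhat(β) − R(β)|)² + 2·lam·D_KL(θ, z)`. -/
theorem gibbs_expected_risk_bound {B : Type*} [Fintype B] [Nonempty B]
    (Rhat R : B → ℝ) (z : B → ℝ)
    (hz_nonneg : ∀ β, 0 ≤ z β) (hz_sum : ∑ β, z β = 1)
    (lam : ℝ) (hlam : 0 < lam)
    (θhat : B → ℝ) (hθhat_nonneg : ∀ β, 0 ≤ θhat β) (hθhat_sum : ∑ β, θhat β = 1)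
    (hθhat_ac : ∀ β, z β = 0 → θhat β = 0)
    (hmin : ∀ p : B → ℝ, (∀ β, 0 ≤ p β) → ∑ β, p β = 1 → (∀ β, z β = 0 → p β = 0) →
      (∑ β, θhat β * Rhat β) + lam * klFin θhat z ≤ (∑ β, p β * Rhat β) + lam * klFin p z)
    (θ : B → ℝ) (hθ_nonneg : ∀ β, 0 ≤ θ β) (hθ_sum : ∑ β, θ β = 1)
    (hθ_ac : ∀ β, z β = 0 → θ β = 0) :
    (∑ β, θhat β * R β) - (∑ β, θ β * R β) ≤
      1 / lam * (⨆ β, |Rhat β - R β|) ^ 2 + 2 * lam * klFin θ z :=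
  gibbs_expected_risk_bound_general Rhat R z hz_nonneg hz_sum lam hlam θhat hθhat_nonneg hθhat_sum
    hθhat_ac hmin θ hθ_nonneg hθ_sum hθ_ac
end
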